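/- arXiv:2006.00224 — 7 statements merged into one kernel-verified Lean document; each statement's English description precedes it below -/
import Mathlib

section
/- Let K be a field of characteristic zero, r ≥ 2, and let L be the free nilpotent Lie algebra of rank r and step 3 over K with generators X_1, …, X_r, G_1 the span of the generators, and V = C_1(L) the commutator ideal. Let p ∈ L* and suppose the linear map β : V → G_1* sending η to the restriction to G_1 of x ↦ p(⁅x,η⁆) is surjective. Then the radical of the form B_p equals {η ∈ V : p(⁅X_i, η⁆) = 0 for all i = 1, …, r}; that is, {v ∈ L : p(⁅w,v⁆) = 0 for all w ∈ L} = {η ∈ C_1(L) : p(⁅ξ,η⁆) = 0 for all ξ ∈ G_1}. -/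
/-- The free nilpotent Lie algebra of rank `r` and step `s` over `K`: the quotient of the
free Lie algebra `F` on `r` generators by the `s`-th term `C_s(F)` of its lower central
series (`C_0 = F`, `C_{k+1} = ⁅F, C_k⁆`). -/
abbrev FreeNilpotentLie (K : Type*) [Field K] (r s : ℕ) :=
  FreeLieAlgebra K (Fin r) ⧸
    LieModule.lowerCentralSeries K (FreeLieAlgebra K (Fin r)) (FreeLieAlgebra K (Fin r)) s

/-- The canonical generators `X_1, …, X_r` of the free nilpotent Lie algebra, i.e. the images
of the free generators. -/
noncomputable def FreeNilpotentLie.gen (K : Type*) [Field K] (r s : ℕ) (i : Fin r) :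
    FreeNilpotentLie K r s :=
  LieSubmodule.Quotient.mk' _ (FreeLieAlgebra.of K i)

/-- `G₁`: the `K`-span of the generators. -/
noncomputable def FreeNilpotentLie.G1 (K : Type*) [Field K] (r s : ℕ) :
    Submodule K (FreeNilpotentLie K r s) :=
  Submodule.span K (Set.range (FreeNilpotentLie.gen K r s))

section Aux

variable (K : Type*) [Field K] (r s : ℕ)

/-- The quotient map as a Lie algebra morphism. -/
noncomputable def FNL.mkHom : FreeLieAlgebra K (Fin r) →ₗ⁅K⁆ FreeNilpotentLie K r s :=
  { (LieModule.lowerCentralSeries K (FreeLieAlgebra K (Fin r))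
      (FreeLieAlgebra K (Fin r)) s).toSubmodule.mkQ with
    map_lie' := fun {_ _} => rfl }

lemma FNL.mkHom_surjective : Function.Surjective (FNL.mkHom K r s) :=
  Submodule.mkQ_surjective _

lemma FNL.lcs_eq_bot :
    LieModule.lowerCentralSeries K (FreeNilpotentLie K r s) (FreeNilpotentLie K r s) s = ⊥ := by
  rw [← LieIdeal.lowerCentralSeries_map_eq s (FNL.mkHom_surjective K r s)]
  rw [eq_bot_iff, LieIdeal.map_le_iff_le_comap]
  intro x hx
  simp only [LieIdeal.mem_comap, LieSubmodule.mem_bot]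
  exact (Submodule.Quotient.mk_eq_zero _).mpr hx

lemma FNL.lcs_one_eq :
    LieModule.lowerCentralSeries K (FreeNilpotentLie K r s) (FreeNilpotentLie K r s) 1 =
      ⁅(⊤ : LieIdeal K (FreeNilpotentLie K r s)), (⊤ : LieIdeal K (FreeNilpotentLie K r s))⁆ := by
  have h := LieModule.lowerCentralSeries_succ K (FreeNilpotentLie K r s)
    (FreeNilpotentLie K r s) 0
  rw [LieModule.lowerCentralSeries_zero] at h
  exact h

lemma FNL.every_mem_lieSpan (x : FreeLieAlgebra K (Fin r)) :
    x ∈ LieSubalgebra.lieSpan K (FreeLieAlgebra K (Fin r))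
      (Set.range (FreeLieAlgebra.of K (X := Fin r))) := by
  set S := LieSubalgebra.lieSpan K (FreeLieAlgebra K (Fin r))
      (Set.range (FreeLieAlgebra.of K (X := Fin r)))
  let f : Fin r → S := fun i => ⟨FreeLieAlgebra.of K i,
    LieSubalgebra.subset_lieSpan (Set.mem_range_self i)⟩
  let g : FreeLieAlgebra K (Fin r) →ₗ⁅K⁆ S := FreeLieAlgebra.lift K f
  have h1 : S.incl.comp g = LieHom.id := by
    rw [← FreeLieAlgebra.lift_comp_of (S.incl.comp g), ← FreeLieAlgebra.lift_comp_of LieHom.id]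
    congr 1
    funext i
    simp [g, f]
  have h2 : S.incl (g x) = x := by
    have := congrArg (fun (h : _ →ₗ⁅K⁆ _) => h x) h1
    simpa using this
  rw [← h2]
  exact (g x).2

/-- Every element of the free nilpotent Lie algebra decomposes as `ξ + η` with `ξ` in the
span of the generators and `η` in the commutator ideal. -/
lemma FNL.decomp (v : FreeNilpotentLie K r s) :
    ∃ ξ ∈ FreeNilpotentLie.G1 K r s,
      ∃ η ∈ LieModule.lowerCentralSeries K (FreeNilpotentLie K r s) (FreeNilpotentLie K r s) 1,
        v = ξ + η := by
  set Smod : Submodule K (FreeNilpotentLie K r s) := FreeNilpotentLie.G1 K r s ⊔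
    (LieModule.lowerCentralSeries K (FreeNilpotentLie K r s)
      (FreeNilpotentLie K r s) 1).toSubmodule with hS
  suffices hv : v ∈ Smod by
    rw [hS, Submodule.mem_sup] at hv
    obtain ⟨ξ, hξ, η, hη, h⟩ := hv
    exact ⟨ξ, hξ, η, hη, h.symm⟩
  let S' : LieSubalgebra K (FreeNilpotentLie K r s) :=
    { Smod with
      lie_mem' := fun {x y} _ _ => by
        apply Submodule.mem_sup_right
        have h : ⁅x, y⁆ ∈ ⁅(⊤ : LieIdeal K (FreeNilpotentLie K r s)),
            (⊤ : LieIdeal K (FreeNilpotentLie K r s))⁆ :=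
          LieSubmodule.lie_mem_lie (LieSubmodule.mem_top x) (LieSubmodule.mem_top y)
        rwa [← FNL.lcs_one_eq K r s] at h }
  obtain ⟨w, rfl⟩ := FNL.mkHom_surjective K r s v
  have hw := FNL.every_mem_lieSpan K r w
  rw [LieSubalgebra.mem_lieSpan] at hw
  exact hw (S'.comap (FNL.mkHom K r s)) (by
    rintro _ ⟨i, rfl⟩
    show FNL.mkHom K r s (FreeLieAlgebra.of K i) ∈ S'
    exact Submodule.mem_sup_left (Submodule.subset_span ⟨i, rfl⟩))

/-- Brackets of two elements of the commutator ideal vanish in step 3. -/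
lemma FNL.bracket_c1_c1 {a b : FreeNilpotentLie K r 3}
    (ha : a ∈ LieModule.lowerCentralSeries K (FreeNilpotentLie K r 3) (FreeNilpotentLie K r 3) 1)
    (hb : b ∈ LieModule.lowerCentralSeries K (FreeNilpotentLie K r 3) (FreeNilpotentLie K r 3) 1) :
    ⁅a, b⁆ = 0 := by
  have hC3 : ∀ c ∈ LieModule.lowerCentralSeries K (FreeNilpotentLie K r 3)
      (FreeNilpotentLie K r 3) 2, ∀ x : FreeNilpotentLie K r 3, ⁅x, c⁆ = 0 := by
    intro c hc x
    have heq : LieModule.lowerCentralSeries K (FreeNilpotentLie K r 3)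
        (FreeNilpotentLie K r 3) 3 = ⁅(⊤ : LieIdeal K (FreeNilpotentLie K r 3)),
          LieModule.lowerCentralSeries K (FreeNilpotentLie K r 3) (FreeNilpotentLie K r 3) 2⁆ :=
      LieModule.lowerCentralSeries_succ K (FreeNilpotentLie K r 3) (FreeNilpotentLie K r 3) 2
    have h : ⁅x, c⁆ ∈ LieModule.lowerCentralSeries K (FreeNilpotentLie K r 3)
        (FreeNilpotentLie K r 3) 3 := by
      rw [heq]
      exact LieSubmodule.lie_mem_lie (LieSubmodule.mem_top x) hc
    rwa [FNL.lcs_eq_bot K r 3, LieSubmodule.mem_bot] at h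
  have hC2 : ∀ y : FreeNilpotentLie K r 3, ⁅y, b⁆ ∈ LieModule.lowerCentralSeries K
      (FreeNilpotentLie K r 3) (FreeNilpotentLie K r 3) 2 := by
    intro y
    have heq : LieModule.lowerCentralSeries K (FreeNilpotentLie K r 3)
        (FreeNilpotentLie K r 3) 2 = ⁅(⊤ : LieIdeal K (FreeNilpotentLie K r 3)),
          LieModule.lowerCentralSeries K (FreeNilpotentLie K r 3) (FreeNilpotentLie K r 3) 1⁆ :=
      LieModule.lowerCentralSeries_succ K (FreeNilpotentLie K r 3) (FreeNilpotentLie K r 3) 1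
    rw [heq]
    exact LieSubmodule.lie_mem_lie (LieSubmodule.mem_top y) hb
  rw [FNL.lcs_one_eq K r 3, ← LieSubmodule.mem_toSubmodule,
    LieSubmodule.lieIdeal_oper_eq_linear_span'] at ha
  induction ha using Submodule.span_induction with
  | mem m hm =>
    obtain ⟨x, -, n, -, rfl⟩ := hm
    rw [lie_lie, hC3 _ (hC2 n) x, hC3 _ (hC2 x) n, sub_zero]
  | zero => rw [zero_lie]
  | add u v hu hv ihu ihv => rw [add_lie, ihu, ihv, add_zero]
  | smul t u hu ihu => rw [smul_lie, ihu, smul_zero]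

end Aux

set_option maxHeartbeats 1000000 in
set_option synthInstance.maxHeartbeats 400000 in
/-- Let `L` be the free nilpotent Lie algebra of rank `r ≥ 2` and step 3
over a field `K` of characteristic zero, `G₁` the span of the generators and `V = C₁(L)`
the commutator ideal.  If `p ∈ L*` is such that the map `β : V → G₁*`,
`η ↦ (x ↦ p ⁅x, η⁆)|_{G₁}`, is surjective, then the radical of `B_p` equals
`{η ∈ C₁(L) : p ⁅ξ, η⁆ = 0 for all ξ ∈ G₁}`. -/
theorem radical_eq_ker_B12_of_surjective
    (K : Type*) [Field K] [CharZero K] (r : ℕ) (hr : 2 ≤ r)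
    (p : Module.Dual K (FreeNilpotentLie K r 3))
    (hsurj : ∀ g : Module.Dual K (FreeNilpotentLie.G1 K r 3),
      ∃ η ∈ LieModule.lowerCentralSeries K (FreeNilpotentLie K r 3)
        (FreeNilpotentLie K r 3) 1,
        ∀ ξ : FreeNilpotentLie.G1 K r 3, p ⁅(ξ : FreeNilpotentLie K r 3), η⁆ = g ξ) :
    {v : FreeNilpotentLie K r 3 | ∀ w : FreeNilpotentLie K r 3, p ⁅w, v⁆ = 0} =
      {η : FreeNilpotentLie K r 3 |
        η ∈ LieModule.lowerCentralSeries K (FreeNilpotentLie K r 3)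
          (FreeNilpotentLie K r 3) 1 ∧
        ∀ ξ ∈ FreeNilpotentLie.G1 K r 3, p ⁅ξ, η⁆ = 0} := by
  ext v
  simp only [Set.mem_setOf_eq]
  constructor
  · intro hv
    obtain ⟨ξ, hξ, η, hη, rfl⟩ := FNL.decomp K r 3 v
    have key : ∀ η' ∈ LieModule.lowerCentralSeries K (FreeNilpotentLie K r 3)
        (FreeNilpotentLie K r 3) 1, p ⁅ξ, η'⁆ = 0 := by
      intro η' hη'
      have h2 : (⁅η', η⁆ : FreeNilpotentLie K r 3) = 0 := FNL.bracket_c1_c1 K r hη' hη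
      have e1 : (⁅η', ξ + η⁆ : FreeNilpotentLie K r 3) = ⁅η', ξ⁆ + ⁅η', η⁆ := by
        exact lie_add η' ξ η
      have h0 := hv η'
      rw [e1, map_add, h2, map_zero, add_zero] at h0
      have e2 : (⁅ξ, η'⁆ : FreeNilpotentLie K r 3) = -⁅η', ξ⁆ := by
        exact (lie_skew (x := ξ) (y := η')).symm
      rw [e2, map_neg, h0, neg_zero]
    have hξ0 : ξ = 0 := by
      have hdual : ∀ g : Module.Dual K (FreeNilpotentLie.G1 K r 3),
          g (⟨ξ, hξ⟩ : FreeNilpotentLie.G1 K r 3) = 0 := by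
        intro g
        obtain ⟨η', hη', hg⟩ := hsurj g
        rw [← hg ⟨ξ, hξ⟩]
        exact key η' hη'
      have := (Module.forall_dual_apply_eq_zero_iff K
        (⟨ξ, hξ⟩ : FreeNilpotentLie.G1 K r 3)).mp hdual
      exact congrArg Subtype.val this
    constructor
    · rw [hξ0, zero_add]; exact hη
    · intro ζ _; exact hv ζ
  · rintro ⟨hη, hperp⟩ w
    obtain ⟨ζ, hζ, η', hη', rfl⟩ := FNL.decomp K r 3 w
    have h2 : (⁅η', v⁆ : FreeNilpotentLie K r 3) = 0 := FNL.bracket_c1_c1 K r hη' hη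
    have e1 : (⁅ζ + η', v⁆ : FreeNilpotentLie K r 3) = ⁅ζ, v⁆ + ⁅η', v⁆ := by
      exact add_lie ζ η' v
    rw [e1, map_add, h2, map_zero, add_zero, hperp ζ hζ]
end

section
/- Let K be a field of characteristic zero, r ≥ 2, and let L be the free nilpotent Lie algebra of rank r and step 3 over K with generators X_1, …, X_r, G_1 the span of the generators, and V = C_1(L). Let p ∈ L* be such that the linear map β : V → G_1*, η ↦ (x ↦ p(⁅x,η⁆))|_{G_1}, is surjective. Then the dimension of the radical {v ∈ L : p(⁅w,v⁆) = 0 for all w ∈ L} of B_p equals dim L − 2r; equivalently, the skew-symmetric form B_p has rank 2r (so the coadjoint orbit through such a generic p has dimension 2r). -/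
/-- The radical of the skew form `B_p(x, y) = p ⁅x, y⁆`. -/
noncomputable def radicalBp {K L : Type*} [Field K] [LieRing L] [LieAlgebra K L]
    (p : Module.Dual K L) : Submodule K L where
  carrier := {v | ∀ w : L, p ⁅w, v⁆ = 0}
  add_mem' := fun {a b} ha hb w => by simp [lie_add, ha w, hb w]
  zero_mem' := fun w => by simp
  smul_mem' := fun c x hx w => by simp [lie_smul, hx w]

/-- `{ξ | ∀ η ∈ S, p ⁅ξ, η⁆ = 0}` as a subspace. -/
noncomputable def perpRight {K L : Type*} [Field K] [LieRing L] [LieAlgebra K L]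
    (p : Module.Dual K L) (S : Set L) : Submodule K L where
  carrier := {ξ : L | ∀ η ∈ S, p ⁅ξ, η⁆ = 0}
  add_mem' := fun {a b} ha hb η hη => by simp [add_lie, ha η hη, hb η hη]
  zero_mem' := fun η hη => by simp
  smul_mem' := fun c x hx η hη => by simp [smul_lie, hx η hη]

/-- `{η | ∀ ξ ∈ S, p ⁅ξ, η⁆ = 0}` as a subspace. -/
noncomputable def perpLeft {K L : Type*} [Field K] [LieRing L] [LieAlgebra K L]
    (p : Module.Dual K L) (S : Set L) : Submodule K L where
  carrier := {η : L | ∀ ξ ∈ S, p ⁅ξ, η⁆ = 0}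
  add_mem' := fun {a b} ha hb ξ hξ => by simp [lie_add, ha ξ hξ, hb ξ hξ]
  zero_mem' := fun ξ hξ => by simp
  smul_mem' := fun c x hx ξ hξ => by simp [lie_smul, hx ξ hξ]

/-! Write `B` for `B_p`, `G` for `G₁` and `V` for `C₁(L)`. Since `⁅C₁, C₁⁆ ⊆ C₃ = 0`, the subspace
`V` is `B`-isotropic, and `L = G + V` because the generators lie in `G`. Surjectivity of `β` says
that `B` pairs `G` nondegenerately against `V`; hence `G ∩ V^⊥ = 0`, so `V^⊥ = V` and `L = G ⊕ V`.
The radical `L^⊥ = G^⊥ ∩ V^⊥ = G^⊥ ∩ V` is the kernel of `β`, of dimension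
`dim V - dim G = dim L - 2 r`. Finite-dimensionality holds because `L` is spanned by the
brackets of at most three generators. -/

open Module LieModule

namespace LinearMap.BilinForm

variable {K E : Type*} [Field K] [AddCommGroup E] [Module K E]
  {B : LinearMap.BilinForm K E} {G V : Submodule K E}

lemma orthogonal_sup (B : LinearMap.BilinForm K E) (N N' : Submodule K E) :
    B.orthogonal (N ⊔ N') = B.orthogonal N ⊓ B.orthogonal N' := by
  refine le_antisymm (le_inf (orthogonal_le le_sup_left) (orthogonal_le le_sup_right)) ?_
  rintro v ⟨hN, hN'⟩ x hx
  obtain ⟨n, hn, n', hn', rfl⟩ := Submodule.mem_sup.mp hx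
  rw [map_add, LinearMap.add_apply, hN n hn, hN' n' hn', add_zero]

lemma inf_orthogonal_eq_bot (hB : B.IsRefl)
    (hsurj : ∀ g : Dual K G, ∃ η ∈ V, ∀ ξ : G, B ξ η = g ξ) :
    G ⊓ B.orthogonal V = ⊥ := by
  refine (Submodule.eq_bot_iff _).mpr fun x ⟨hxG, hxV⟩ => ?_
  suffices (⟨x, hxG⟩ : G) = 0 by simpa using congrArg Subtype.val this
  refine (Module.forall_dual_apply_eq_zero_iff K _).mp fun g => ?_
  obtain ⟨η, hη, hg⟩ := hsurj g
  rw [← hg]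
  exact hB _ _ (hxV η hη)

lemma orthogonal_eq_self (hB : B.IsRefl) (hGV : G ⊔ V = ⊤) (hV : V ≤ B.orthogonal V)
    (hsurj : ∀ g : Dual K G, ∃ η ∈ V, ∀ ξ : G, B ξ η = g ξ) : B.orthogonal V = V :=
  calc B.orthogonal V = (V ⊔ G) ⊓ B.orthogonal V := by rw [sup_comm, hGV, top_inf_eq]
    _ = V ⊔ G ⊓ B.orthogonal V := sup_inf_assoc_of_le G hV
    _ = V := by rw [inf_orthogonal_eq_bot hB hsurj, sup_bot_eq]

variable [FiniteDimensional K E]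

lemma finrank_add_finrank_of_sup_eq_top (hB : B.IsRefl) (hGV : G ⊔ V = ⊤)
    (hV : V ≤ B.orthogonal V) (hsurj : ∀ g : Dual K G, ∃ η ∈ V, ∀ ξ : G, B ξ η = g ξ) :
    finrank K V + finrank K G = finrank K E := by
  have hGV' : G ⊓ V = ⊥ :=
    eq_bot_iff.mpr <| inf_orthogonal_eq_bot hB hsurj ▸ inf_le_inf_left G hV
  have := Submodule.finrank_sup_add_finrank_inf_eq G V
  rw [hGV, hGV', finrank_top, finrank_bot] at this
  omega

lemma finrank_orthogonal_inf_add_finrank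
    (hsurj : ∀ g : Dual K G, ∃ η ∈ V, ∀ ξ : G, B ξ η = g ξ) :
    finrank K ↥(B.orthogonal G ⊓ V) + finrank K G = finrank K V := by
  let β : V →ₗ[K] Dual K G := (G.subtype.dualMap ∘ₗ B.flip).domRestrict V
  have hβ : LinearMap.range β = ⊤ := by
    refine LinearMap.range_eq_top.mpr fun g => ?_
    obtain ⟨η, hη, hg⟩ := hsurj g
    exact ⟨⟨η, hη⟩, LinearMap.ext hg⟩
  have hker : LinearMap.ker (G.subtype.dualMap ∘ₗ B.flip) = B.orthogonal G := by
    ext x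
    simp [LinearMap.ext_iff]
  have := LinearMap.finrank_range_add_finrank_ker β
  rw [hβ, finrank_top, Subspace.dual_finrank_eq, LinearMap.ker_domRestrict, hker,
    ← Submodule.finrank_map_subtype_eq, Submodule.map_comap_subtype, inf_comm] at this
  omega

theorem finrank_orthogonal_top_eq (hB : B.IsRefl) (hGV : G ⊔ V = ⊤)
    (hV : V ≤ B.orthogonal V) (hsurj : ∀ g : Dual K G, ∃ η ∈ V, ∀ ξ : G, B ξ η = g ξ) :
    finrank K (B.orthogonal ⊤) = finrank K E - 2 * finrank K G := by
  have hrad : B.orthogonal ⊤ = B.orthogonal G ⊓ V := by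
    rw [← hGV, orthogonal_sup, orthogonal_eq_self hB hGV hV hsurj]
  have h₁ := finrank_add_finrank_of_sup_eq_top hB hGV hV hsurj
  have h₂ := finrank_orthogonal_inf_add_finrank hsurj
  rw [hrad]
  omega

end LinearMap.BilinForm

namespace LieModule

variable {R L M : Type*} [CommRing R] [LieRing L] [LieAlgebra R L]
  [AddCommGroup M] [Module R M] [LieRingModule L M]

lemma lie_mem_lowerCentralSeries_succ (x : L) {k : ℕ} {m : M}
    (hm : m ∈ lowerCentralSeries R L M k) : ⁅x, m⁆ ∈ lowerCentralSeries R L M (k + 1) := by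
  rw [lowerCentralSeries_succ]
  exact LieSubmodule.lie_mem_lie (LieSubmodule.mem_top x) hm

lemma lie_lie_lie_mem_lowerCentralSeries_three (a b c : L) (m : M) :
    ⁅a, ⁅b, ⁅c, m⁆⁆⁆ ∈ lowerCentralSeries R L M 3 :=
  lie_mem_lowerCentralSeries_succ a <| lie_mem_lowerCentralSeries_succ b <|
    lie_mem_lowerCentralSeries_succ c (LieSubmodule.mem_top m)

lemma lie_lowerCentralSeries_one_le :
    ⁅lowerCentralSeries R L L 1, lowerCentralSeries R L L 1⁆ ≤ lowerCentralSeries R L L 3 := by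
  rw [LieSubmodule.lie_le_iff]
  intro u hu v hv
  rw [lowerCentralSeries_succ, lowerCentralSeries_zero, ← LieSubmodule.mem_toSubmodule,
    LieSubmodule.lieIdeal_oper_eq_linear_span'] at hu
  induction hu using Submodule.span_induction with
  | mem _ h =>
    obtain ⟨x, -, y, -, rfl⟩ := h
    rw [lie_lie]
    exact sub_mem (lie_mem_lowerCentralSeries_succ x (lie_mem_lowerCentralSeries_succ y hv))
      (lie_mem_lowerCentralSeries_succ y (lie_mem_lowerCentralSeries_succ x hv))
  | zero => simp
  | add _ _ _ _ ha hb => rw [add_lie]; exact add_mem ha hb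
  | smul t _ _ ha => rw [smul_lie]; exact SMulMemClass.smul_mem t ha

lemma lowerCentralSeries_quotient_eq_bot (k : ℕ) :
    lowerCentralSeries R (L ⧸ lowerCentralSeries R L L k) (L ⧸ lowerCentralSeries R L L k) k
      = ⊥ := by
  rw [← LieSubmodule.toSubmodule_inj, ← coe_lowerCentralSeries_ideal_quot_eq,
    ← map_lowerCentralSeries_eq k (LieSubmodule.Quotient.surjective_mk' _),
    (LieSubmodule.Quotient.map_mk'_eq_bot_le _ _).mpr le_rfl]
  exact LieSubmodule.bot_toSubmodule.symm

end LieModule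

section

variable {R L L' : Type*} [CommRing R] [LieRing L] [LieAlgebra R L] [LieRing L'] [LieAlgebra R L']

lemma Submodule.eq_top_of_lieSpan_eq_top {S : Set L} (hS : LieSubalgebra.lieSpan R L S = ⊤)
    (T : Submodule R L) (hST : S ⊆ T) (hT : ∀ s ∈ S, ∀ t ∈ T, ⁅s, t⁆ ∈ T) : T = ⊤ := by
  suffices ∀ x ∈ LieSubalgebra.lieSpan R L S, x ∈ T ∧ ∀ t ∈ T, ⁅x, t⁆ ∈ T from
    eq_top_iff.mpr fun x _ => (this x (hS ▸ LieSubalgebra.mem_top x)).1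
  intro x hx
  induction hx using LieSubalgebra.lieSpan_induction with
  | mem s hs => exact ⟨hST hs, hT s hs⟩
  | zero => exact ⟨T.zero_mem, fun t _ => by simp⟩
  | add x y _ _ hx hy =>
    refine ⟨T.add_mem hx.1 hy.1, fun t ht => ?_⟩
    rw [add_lie]
    exact T.add_mem (hx.2 t ht) (hy.2 t ht)
  | smul c x _ hx =>
    refine ⟨T.smul_mem c hx.1, fun t ht => ?_⟩
    rw [smul_lie]
    exact T.smul_mem c (hx.2 t ht)
  | lie x y _ _ hx hy =>
    refine ⟨hx.2 y hy.1, fun t ht => ?_⟩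
    rw [lie_lie]
    exact T.sub_mem (hx.2 _ (hy.2 t ht)) (hy.2 _ (hx.2 t ht))

lemma LieHom.lowerCentralSeries_one_le_ker [IsLieAbelian L'] (f : L →ₗ⁅R⁆ L') :
    lowerCentralSeries R L L 1 ≤ f.ker := by
  rw [lowerCentralSeries_succ, LieSubmodule.lie_le_iff]
  intro x _ y _
  rw [LieHom.mem_ker, LieHom.map_lie, trivial_lie_zero]

def LieIdeal.mkQ (I : LieIdeal R L) : L →ₗ⁅R⁆ L ⧸ I :=
  { (I : Submodule R L).mkQ with map_lie' := rfl }

lemma LieIdeal.mkQ_surjective (I : LieIdeal R L) : Function.Surjective I.mkQ :=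
  Submodule.Quotient.mk_surjective _

namespace LieAlgebra

lemma span_sup_lowerCentralSeries_one_eq_top {S : Set L}
    (hS : LieSubalgebra.lieSpan R L S = ⊤) :
    Submodule.span R S ⊔ (lowerCentralSeries R L L 1).toSubmodule = ⊤ :=
  Submodule.eq_top_of_lieSpan_eq_top hS _
    (fun _ hs => Submodule.mem_sup_left (Submodule.subset_span hs))
    fun s _ t _ => Submodule.mem_sup_right
      (lie_mem_lowerCentralSeries_succ s (LieSubmodule.mem_top t))

lemma finite_of_lieSpan_eq_top {S : Set L} (hfin : S.Finite)
    (hS : LieSubalgebra.lieSpan R L S = ⊤) (h3 : lowerCentralSeries R L L 3 = ⊥) :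
    Module.Finite R L := by
  set S₂ := Set.image2 (⁅·, ·⁆) S S
  set S₃ := Set.image2 (⁅·, ·⁆) S S₂
  have hT : Submodule.span R (S ∪ S₂ ∪ S₃) = ⊤ := by
    refine Submodule.eq_top_of_lieSpan_eq_top hS _
      (Set.subset_union_left.trans Set.subset_union_left |>.trans Submodule.subset_span)
      fun s hs t ht => ?_
    induction ht using Submodule.span_induction with
    | mem b hb =>
      rcases hb with (hb | hb) | ⟨a, -, _, ⟨c, -, d, -, rfl⟩, rfl⟩
      · exact Submodule.subset_span (.inl (.inr (Set.mem_image2_of_mem hs hb)))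
      · exact Submodule.subset_span (.inr (Set.mem_image2_of_mem hs hb))
      · have h := lie_lie_lie_mem_lowerCentralSeries_three (R := R) s a c d
        rw [h3, LieSubmodule.mem_bot] at h
        rw [h]
        exact Submodule.zero_mem _
    | zero => simp
    | add _ _ _ _ ha hb => rw [lie_add]; exact add_mem ha hb
    | smul c _ _ ha => rw [lie_smul]; exact Submodule.smul_mem _ c ha
  exact Module.finite_def.mpr <| hT ▸ Submodule.fg_span
    ((hfin.union (hfin.image2 _ hfin)).union (hfin.image2 _ (hfin.image2 _ hfin)))

def kirillovForm (p : Module.Dual R L) : LinearMap.BilinForm R L :=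
  (LieAlgebra.ad R L : L →ₗ[R] Module.End R L).compr₂ p

@[simp]
lemma kirillovForm_apply (p : Module.Dual R L) (x y : L) : kirillovForm p x y = p ⁅x, y⁆ :=
  rfl

lemma kirillovForm_isAlt (p : Module.Dual R L) : (kirillovForm p).IsAlt := fun x => by
  simp

lemma lowerCentralSeries_one_le_orthogonal (p : Module.Dual R L)
    (h3 : lowerCentralSeries R L L 3 = ⊥) :
    (lowerCentralSeries R L L 1).toSubmodule ≤
      (kirillovForm p).orthogonal (lowerCentralSeries R L L 1) := fun v hv u hu => by
  have h := lie_lowerCentralSeries_one_le (R := R) (L := L) (LieSubmodule.lie_mem_lie hu hv)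
  rw [h3, LieSubmodule.mem_bot] at h
  rw [kirillovForm_apply, h, map_zero]

end LieAlgebra

end

lemma radicalBp_eq_orthogonal_top {K L : Type*} [Field K] [LieRing L] [LieAlgebra K L]
    (p : Module.Dual K L) : radicalBp p = (LieAlgebra.kirillovForm p).orthogonal ⊤ := by
  ext v
  simp [radicalBp]

lemma FreeLieAlgebra.lieSpan_range_of_eq_top (R X : Type*) [CommRing R] :
    LieSubalgebra.lieSpan R (FreeLieAlgebra R X) (Set.range (of R)) = ⊤ := by
  set A := LieSubalgebra.lieSpan R (FreeLieAlgebra R X) (Set.range (of R))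
  let f : FreeLieAlgebra R X →ₗ⁅R⁆ A :=
    lift R fun x => ⟨of R x, LieSubalgebra.subset_lieSpan (Set.mem_range_self x)⟩
  have hf : A.incl.comp f = LieHom.id := hom_ext fun x => by simp [f]
  refine eq_top_iff.mpr fun x _ => ?_
  have hx : (f x : FreeLieAlgebra R X) = x := LieHom.congr_fun hf x
  exact hx ▸ (f x).2

namespace FreeNilpotentLie

variable (K : Type*) [Field K] (r : ℕ)

lemma lieSpan_range_gen (s : ℕ) :
    LieSubalgebra.lieSpan K (FreeNilpotentLie K r s) (Set.range (gen K r s)) = ⊤ := by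
  set I := lowerCentralSeries K (FreeLieAlgebra K (Fin r)) (FreeLieAlgebra K (Fin r)) s
  have hgen : Set.range (gen K r s) = LieIdeal.mkQ I '' Set.range (FreeLieAlgebra.of K) := by
    rw [← Set.range_comp]
    rfl
  rw [hgen, ← LieSubalgebra.map_lieSpan, FreeLieAlgebra.lieSpan_range_of_eq_top,
    ← LieHom.range_eq_map, LieHom.range_eq_top]
  exact LieIdeal.mkQ_surjective I

attribute [local instance 100] LieRing.ofAssociativeRing in
lemma linearIndependent_gen {s : ℕ} (hs : 1 ≤ s) : LinearIndependent K (gen K r s) := by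
  let ℓ : FreeLieAlgebra K (Fin r) →ₗ⁅K⁆ (Fin r → K) :=
    FreeLieAlgebra.lift K fun i => Pi.single i 1
  have : IsLieAbelian (Fin r → K) := isMulCommutative_iff_isLieAbelian.mp inferInstance
  have hker : (lowerCentralSeries K (FreeLieAlgebra K (Fin r)) _ s).toSubmodule ≤
      LinearMap.ker (ℓ : FreeLieAlgebra K (Fin r) →ₗ[K] Fin r → K) :=
    (antitone_lowerCentralSeries K _ _ hs).trans ℓ.lowerCentralSeries_one_le_ker
  refine LinearIndependent.of_comp (Submodule.liftQ _ _ hker) ?_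
  convert Pi.linearIndependent_single_one (Fin r) K with i
  · exact FreeLieAlgebra.lift_of_apply _ i
  -- the module structure of `Fin r → K` coming from its Lie algebra structure is the usual one
  all_goals rfl

lemma finrank_G1 {s : ℕ} (hs : 1 ≤ s) : finrank K (G1 K r s) = r := by
  rw [G1, finrank_span_eq_card (linearIndependent_gen K r hs), Fintype.card_fin]

end FreeNilpotentLie

theorem finrank_radical_eq_of_surjective_general
    (K : Type*) [Field K] (r : ℕ)
    (p : Module.Dual K (FreeNilpotentLie K r 3))
    (hsurj : ∀ g : Module.Dual K (FreeNilpotentLie.G1 K r 3),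
      ∃ η ∈ LieModule.lowerCentralSeries K (FreeNilpotentLie K r 3)
        (FreeNilpotentLie K r 3) 1,
        ∀ ξ : FreeNilpotentLie.G1 K r 3, p ⁅(ξ : FreeNilpotentLie K r 3), η⁆ = g ξ) :
    Module.finrank K (radicalBp p) =
      Module.finrank K (FreeNilpotentLie K r 3) - 2 * r := by
  have hspan := FreeNilpotentLie.lieSpan_range_gen K r 3
  have h3 := lowerCentralSeries_quotient_eq_bot (R := K) (L := FreeLieAlgebra K (Fin r)) 3
  have : FiniteDimensional K (FreeNilpotentLie K r 3) :=
    LieAlgebra.finite_of_lieSpan_eq_top (Set.finite_range _) hspan h3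
  have hGV : FreeNilpotentLie.G1 K r 3 ⊔ (lowerCentralSeries K _ _ 1).toSubmodule = ⊤ :=
    LieAlgebra.span_sup_lowerCentralSeries_one_eq_top hspan
  rw [radicalBp_eq_orthogonal_top, LinearMap.BilinForm.finrank_orthogonal_top_eq
    (LieAlgebra.kirillovForm_isAlt p).isRefl hGV
    (LieAlgebra.lowerCentralSeries_one_le_orthogonal p h3) hsurj,
    FreeNilpotentLie.finrank_G1 K r (by norm_num)]

/-- Let `L` be the free nilpotent Lie algebra of rank `r ≥ 2` and step 3
over a field of characteristic zero.  If `p ∈ L*` is such that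
`β : C₁(L) → G₁*`, `η ↦ (x ↦ p ⁅x, η⁆)|_{G₁}`, is surjective, then the radical of `B_p`
has dimension `dim L − 2r`, i.e. `B_p` has rank `2r`. -/
theorem finrank_radical_eq_of_surjective
    (K : Type*) [Field K] [CharZero K] (r : ℕ) (hr : 2 ≤ r)
    (p : Module.Dual K (FreeNilpotentLie K r 3))
    (hsurj : ∀ g : Module.Dual K (FreeNilpotentLie.G1 K r 3),
      ∃ η ∈ LieModule.lowerCentralSeries K (FreeNilpotentLie K r 3)
        (FreeNilpotentLie K r 3) 1,
        ∀ ξ : FreeNilpotentLie.G1 K r 3, p ⁅(ξ : FreeNilpotentLie K r 3), η⁆ = g ξ) :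
    Module.finrank K (radicalBp p) =
      Module.finrank K (FreeNilpotentLie K r 3) - 2 * r :=
  finrank_radical_eq_of_surjective_general K r p hsurj
end

section
/- Let s ≥ 3, r ≥ 2, and assume r ≥ 3 or s ≥ 4. Let L be the free nilpotent Lie algebra of rank r and step s over ℝ with generators X_1, …, X_r; L is finite-dimensional, say of dimension N, and fix a basis (b_1, …, b_N) of L. For c ∈ ℝ^N let p_c ∈ L* be the functional with p_c(b_k) = c_k. Then the set of all c ∈ ℝ^N for which the linear map from C_{s−2}(L) to ℝ^r sending η to (p_c(⁅X_1,η⁆), …, p_c(⁅X_r,η⁆)) is surjective is an open and dense subset of ℝ^N; i.e., for almost all p ∈ L* this map is surjective. -/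
/-!
For fixed `η₁, …, η_r ∈ C_{s-2}(L)`, the map `η ↦ (p ⁅X_i, η⁆)_i` is surjective as soon as the
`r × r` matrix `(p ⁅X_i, η_j⁆)` is invertible. As `p_c` depends linearly on `c`, this makes
surjectivity an open condition on `c`, and a dense one as soon as it holds at a single `c₀`:
along the line from any `c` to `c₀` the determinant is a nonzero polynomial, with finitely many
roots.

Such a `c₀` comes from a representation of `L` on `r` copies of the `(s+1)`-dimensional filiform
Lie algebra of strictly upper triangular matrices: in the `m`-th copy `X_m` acts as the shift `J`
and `X_{m+1}` as the matrix unit `E_{0,1}`. Strict upper triangularity kills `C_s`, so the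
representation factors through `L`, and `⁅X_i, ad(X_j)^{s-2} X_{j+1}⁆` has top-right entry `1` in
the `j`-th copy if `i = j` and `0` everywhere else. For `r = 2` the `m`-th copy also sees
`ad(X_{m+1})^{s-2} X_m = ad(E_{0,1})^{s-2} J`, which vanishes only for `s ≥ 4`.
-/

open Matrix

section SurjectiveFamily

variable {K ι W : Type*} [Field K] [AddCommGroup W] [Module K W]

theorem LinearMap.surjective_iff_exists_det_ne_zero [Fintype ι] [DecidableEq ι]
    (f : W →ₗ[K] ι → K) :
    Function.Surjective f ↔ ∃ η : ι → W, (Matrix.of fun i j => f (η j) i).det ≠ 0 := by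
  constructor
  · intro hf
    choose η hη using fun j => hf (Pi.single j 1)
    refine ⟨η, ?_⟩
    have h₁ : (Matrix.of fun i j => f (η j) i) = 1 := by
      ext i j
      simp [hη, Matrix.one_apply, Pi.single_apply]
    simp [h₁]
  · rintro ⟨η, hdet⟩ d
    set M := Matrix.of fun i j => f (η j) i
    refine ⟨∑ j, (M⁻¹ *ᵥ d) j • η j, ?_⟩
    have hM : f (∑ j, (M⁻¹ *ᵥ d) j • η j) = M *ᵥ (M⁻¹ *ᵥ d) := by
      ext i
      simp [M, Matrix.mulVec, dotProduct, mul_comm]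
    rw [hM, Matrix.mulVec_mulVec, Matrix.mul_nonsing_inv _ (isUnit_iff_ne_zero.mpr hdet),
      Matrix.one_mulVec]

variable {V : Type*} [AddCommGroup V] [Module K V]

def LinearMap.valueMatrix (T : V →ₗ[K] W →ₗ[K] ι → K) (η : ι → W) :
    V →ₗ[K] Matrix ι ι K :=
  (Matrix.ofLinearEquiv K).toLinearMap ∘ₗ
    LinearMap.pi fun i => LinearMap.pi fun j => LinearMap.proj i ∘ₗ T.flip (η j)

@[simp]
theorem LinearMap.valueMatrix_apply (T : V →ₗ[K] W →ₗ[K] ι → K) (η : ι → W) (c : V) :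
    T.valueMatrix η c = Matrix.of fun i j => T c (η j) i := rfl

end SurjectiveFamily

section Topology

variable {ι V : Type*} [Fintype ι] [DecidableEq ι] [AddCommGroup V] [Module ℝ V]
  [TopologicalSpace V]

open Polynomial in
theorem dense_setOf_det_ne_zero [ContinuousAdd V] [ContinuousSMul ℝ V]
    (A : V →ₗ[ℝ] Matrix ι ι ℝ) {c₀ : V} (h₀ : (A c₀).det ≠ 0) :
    Dense {c | (A c).det ≠ 0} := by
  intro x
  set u := c₀ - x
  set P : ℝ[X] := (Matrix.of fun i j => C (A x i j) + X * C (A u i j)).det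
  have hP : ∀ t : ℝ, P.eval t = (A (x + t • u)).det := by
    intro t
    rw [← coe_evalRingHom, RingHom.map_det]
    congr 1
    ext i j
    simp only [RingHom.mapMatrix_apply, Matrix.map_apply, Matrix.of_apply, coe_evalRingHom,
      eval_add, eval_mul, eval_C, eval_X, map_add, map_smul, Matrix.add_apply, Matrix.smul_apply,
      smul_eq_mul]
  have hP₀ : P ≠ 0 := by
    rintro hP0
    apply h₀
    simpa [hP0, u] using (hP 1).symm
  have hroots : Dense {t : ℝ | ¬ P.IsRoot t} :=
    (Polynomial.finite_setOfPred_isRoot hP₀).countable.dense_compl ℝ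
  have hline : Continuous fun t : ℝ => x + t • u := by fun_prop
  simpa using map_mem_closure hline (hroots 0) fun t ht => by
    rw [Set.mem_ofPred_eq, ← hP]
    exact ht

variable {W : Type*} [AddCommGroup W] [Module ℝ W]

theorem isOpen_setOf_surjective [IsTopologicalAddGroup V] [ContinuousSMul ℝ V] [T2Space V]
    [FiniteDimensional ℝ V] (T : V →ₗ[ℝ] W →ₗ[ℝ] ι → ℝ) :
    IsOpen {c | Function.Surjective (T c)} := by
  have hset : {c | Function.Surjective (T c)} =
      ⋃ η : ι → W, {c | (T.valueMatrix η c).det ≠ 0} := by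
    ext c
    simp [LinearMap.surjective_iff_exists_det_ne_zero]
  rw [hset]
  exact isOpen_iUnion fun η => isOpen_ne.preimage
    (T.valueMatrix η).continuous_of_finiteDimensional.matrix_det

theorem dense_setOf_surjective [ContinuousAdd V] [ContinuousSMul ℝ V]
    (T : V →ₗ[ℝ] W →ₗ[ℝ] ι → ℝ) {c₀ : V} (h₀ : Function.Surjective (T c₀)) :
    Dense {c | Function.Surjective (T c)} := by
  obtain ⟨η, hη⟩ := (T c₀).surjective_iff_exists_det_ne_zero.1 h₀
  refine (dense_setOf_det_ne_zero (T.valueMatrix η) hη).mono fun c hc => ?_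
  exact (T c).surjective_iff_exists_det_ne_zero.2 ⟨η, hc⟩

end Topology

section BracketMap

variable {K L ι : Type*} [Field K] [LieRing L] [LieAlgebra K L]

def bracketMap (X : ι → L) (C : Submodule K L) : (L →ₗ[K] K) →ₗ[K] C →ₗ[K] ι → K :=
  LinearMap.mk₂ K (fun p η i => p ⁅X i, (η : L)⁆)
    (fun _ _ _ => by ext; simp)
    (fun _ _ _ => by ext; simp)
    (fun _ _ _ => by ext; simp)
    (fun _ _ _ => by ext; simp)

theorem surjective_bracketMap_iff (X : ι → L) (C : Submodule K L) (p : L →ₗ[K] K) :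
    Function.Surjective (bracketMap X C p) ↔ ∀ d : ι → K, ∃ η ∈ C, ∀ i, p ⁅X i, η⁆ = d i := by
  simp [Function.Surjective, bracketMap, funext_iff]

end BracketMap

def adWord {A : Type*} [LieRing A] {r : ℕ} [NeZero r] (k : ℕ) (x : Fin r → A) (j : Fin r) : A :=
  (⁅x j, ·⁆)^[k] (x (j + 1))

theorem adWord_mem_lowerCentralSeries {R L : Type*} [CommRing R] [LieRing L] [LieAlgebra R L]
    {r : ℕ} [NeZero r] (k : ℕ) (x : Fin r → L) (j : Fin r) :
    adWord k x j ∈ LieModule.lowerCentralSeries R L L k :=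
  LieModule.iterate_toEnd_mem_lowerCentralSeries R L L (x j) (x (j + 1)) k

theorem map_adWord {A B : Type*} [LieRing A] [LieRing B] {f : A → B}
    (hf : ∀ a b, f ⁅a, b⁆ = ⁅f a, f b⁆) {r : ℕ} [NeZero r] (k : ℕ) (x : Fin r → A) (j : Fin r) :
    f (adWord k x j) = adWord k (f ∘ x) j :=
  (Function.Semiconj.iterate_right (fun z => hf (x j) z) k) (x (j + 1))

theorem Fin.add_one_ne_self {r : ℕ} [NeZero r] (hr : 2 ≤ r) (m : Fin r) : m + 1 ≠ m := by
  intro h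
  have h₁ : (1 : Fin r) = 0 := by simpa using h
  simp [Fin.ext_iff, Nat.mod_eq_of_lt (show 1 < r by omega)] at h₁

theorem Fin.add_one_add_one_ne_self {r : ℕ} [NeZero r] (hr : 3 ≤ r) (m : Fin r) :
    m + 1 + 1 ≠ m := by
  intro h
  have h₂ : (1 + 1 : Fin r) = 0 := by simpa [add_assoc] using h
  simp [Fin.ext_iff, Fin.val_add, Nat.mod_eq_of_lt (show 1 < r by omega),
    Nat.mod_eq_of_lt (show 2 < r by omega)] at h₂

section StrictUpperFiltration

attribute [local instance] LieRing.ofAssociativeRing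

variable (ι R : Type*) [CommRing R] (n : ℕ)

def strictUpperFiltration (k : ℕ) : Submodule R (ι → Matrix (Fin n) (Fin n) R) where
  carrier := {M | ∀ (m : ι) (a b : Fin n), (b : ℕ) < a + k + 1 → M m a b = 0}
  add_mem' hM hN m a b h := by simp [hM m a b h, hN m a b h]
  zero_mem' _ _ _ _ := rfl
  smul_mem' c M hM m a b h := by simp [hM m a b h]

variable {ι R n}

theorem strictUpperFiltration_antitone {j k : ℕ} (h : j ≤ k) :
    strictUpperFiltration ι R n k ≤ strictUpperFiltration ι R n j :=
  fun _ hM m a b hb => hM m a b (by omega)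

theorem strictUpperFiltration_eq_bot {k : ℕ} (h : n ≤ k + 1) :
    strictUpperFiltration ι R n k = ⊥ := by
  refine eq_bot_iff.2 fun M hM => ?_
  ext m a b
  exact hM m a b (by omega)

theorem mul_mem_strictUpperFiltration {j k : ℕ} {u v : ι → Matrix (Fin n) (Fin n) R}
    (hu : u ∈ strictUpperFiltration ι R n j) (hv : v ∈ strictUpperFiltration ι R n k) :
    u * v ∈ strictUpperFiltration ι R n (j + k + 1) := by
  intro m a b hb
  rw [Pi.mul_apply, Matrix.mul_apply]
  refine Finset.sum_eq_zero fun c _ => ?_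
  by_cases hc : (c : ℕ) < a + j + 1
  · simp [hu m a c hc]
  · simp [hv m c b (by omega)]

theorem lie_mem_strictUpperFiltration {j k : ℕ} {u v : ι → Matrix (Fin n) (Fin n) R}
    (hu : u ∈ strictUpperFiltration ι R n j) (hv : v ∈ strictUpperFiltration ι R n k) :
    ⁅u, v⁆ ∈ strictUpperFiltration ι R n (j + k + 1) := by
  rw [Ring.lie_def]
  refine sub_mem (mul_mem_strictUpperFiltration hu hv) ?_
  rw [show j + k + 1 = k + j + 1 by omega]
  exact mul_mem_strictUpperFiltration hv hu

variable (ι R n) in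
def strictUpperSubalgebra : LieSubalgebra R (ι → Matrix (Fin n) (Fin n) R) :=
  { strictUpperFiltration ι R n 0 with
    lie_mem' := fun hu hv =>
      strictUpperFiltration_antitone (Nat.zero_le _) (lie_mem_strictUpperFiltration hu hv) }

theorem FreeLieAlgebra.lift_apply_mem {X L : Type*} [LieRing L] [LieAlgebra R L]
    (S : LieSubalgebra R L) {f : X → L} (hf : ∀ x, f x ∈ S) (z : FreeLieAlgebra R X) :
    lift R f z ∈ S := by
  have h : S.incl.comp (lift R fun x => (⟨f x, hf x⟩ : S)) = lift R f :=
    FreeLieAlgebra.hom_ext fun x => by simp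
  rw [← h]
  exact Subtype.property _

theorem FreeLieAlgebra.lift_mem_strictUpperFiltration {X : Type*}
    {f : X → ι → Matrix (Fin n) (Fin n) R} (hf : ∀ x, f x ∈ strictUpperFiltration ι R n 0)
    (k : ℕ) {z : FreeLieAlgebra R X}
    (hz : z ∈ LieModule.lowerCentralSeries R (FreeLieAlgebra R X) (FreeLieAlgebra R X) k) :
    lift R f z ∈ strictUpperFiltration ι R n k := by
  induction k generalizing z with
  | zero => exact lift_apply_mem (strictUpperSubalgebra ι R n) hf z
  | succ k ih =>
    rw [LieModule.lowerCentralSeries_succ, ← LieSubmodule.mem_toSubmodule,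
      LieSubmodule.lieIdeal_oper_eq_linear_span'] at hz
    refine (Submodule.span_le (p := (strictUpperFiltration ι R n (k + 1)).comap
      (lift R f).toLinearMap)).2 ?_ hz
    rintro _ ⟨x, -, y, hy, rfl⟩
    simpa using lie_mem_strictUpperFiltration (lift_apply_mem (strictUpperSubalgebra ι R n) hf x)
      (ih hy)

end StrictUpperFiltration

namespace FiliformModel

attribute [local instance] LieRing.ofAssociativeRing

open Matrix Fin.NatCast

variable {r s : ℕ}

/- `E s u` is the matrix unit `E_{0,u}` and `J s` minus the superdiagonal shift, normalised so that
`⁅J, E u⁆ = E (u + 1)`: `J` and the `E u` span the filiform Lie algebra of step `s`. -/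
variable (s) in
noncomputable def E (u : ℕ) : Matrix (Fin (s + 1)) (Fin (s + 1)) ℝ := single 0 u 1

variable (s) in
noncomputable def J : Matrix (Fin (s + 1)) (Fin (s + 1)) ℝ :=
  -∑ k : Fin s, single k.castSucc k.succ 1

theorem J_mul_E (u : ℕ) : J s * E s u = 0 := by
  simp [J, E, Finset.sum_mul, Matrix.single_mul_single_of_ne _ _ _ _ (Fin.succ_ne_zero _)]

theorem E_mul_J {u : ℕ} (hu : u < s) : E s u * J s = -E s (u + 1) := by
  have hu' : (u : Fin (s + 1)) = (⟨u, hu⟩ : Fin s).castSucc :=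
    Fin.ext (Fin.val_cast_of_lt (by omega))
  rw [J, E, E, mul_neg, Finset.mul_sum, Finset.sum_eq_single ⟨u, hu⟩]
  · rw [hu', single_mul_single_same, one_mul]
    congr
    ext
    exact (Fin.val_cast_of_lt (by omega)).symm
  · intro k _ hk
    refine Matrix.single_mul_single_of_ne _ _ _ _ (fun h => hk ?_) _
    rw [hu'] at h
    exact (Fin.castSucc_injective _ h).symm
  · simp

theorem E_mul_E {u : ℕ} (v : ℕ) (hu : u ≤ s) (hu₀ : u ≠ 0) : E s u * E s v = 0 :=
  Matrix.single_mul_single_of_ne _ _ _ _ (fun h => hu₀ <| by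
    simpa [Fin.ext_iff, Fin.val_cast_of_lt (show u < s + 1 by omega)] using h) _

theorem lie_J_E {u : ℕ} (hu : u < s) : ⁅J s, E s u⁆ = E s (u + 1) := by
  rw [Ring.lie_def, J_mul_E, E_mul_J hu, zero_sub, neg_neg]

theorem lie_E_E {u v : ℕ} (hu : u ≤ s) (hu₀ : u ≠ 0) (hv : v ≤ s) (hv₀ : v ≠ 0) :
    ⁅E s u, E s v⁆ = 0 := by
  rw [Ring.lie_def, E_mul_E _ hu hu₀, E_mul_E _ hv hv₀, sub_zero]

theorem iterate_lie_J_E_one {k : ℕ} (hk : k < s) : (⁅J s, ·⁆)^[k] (E s 1) = E s (k + 1) := by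
  induction k with
  | zero => rfl
  | succ k ih => rw [Function.iterate_succ_apply', ih (by omega), lie_J_E hk]

theorem iterate_lie_E_one_J {k : ℕ} (hk : 2 ≤ k) (hs : 2 ≤ s) :
    (⁅E s 1, ·⁆)^[k] (J s) = 0 := by
  obtain ⟨k, rfl⟩ := Nat.exists_eq_add_of_le' hk
  have h2 : ⁅E s 1, ⁅E s 1, J s⁆⁆ = 0 := by
    rw [Ring.lie_def (E s 1) (J s), E_mul_J (by omega), J_mul_E, sub_zero, lie_neg,
      lie_E_E (by omega) one_ne_zero hs two_ne_zero, neg_zero]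
  rw [Function.iterate_add_apply]
  simp [h2, Function.iterate_fixed]

theorem lie_apply (u v : Fin r → Matrix (Fin (s + 1)) (Fin (s + 1)) ℝ) (m : Fin r) :
    ⁅u, v⁆ m = ⁅u m, v m⁆ := by
  simp [Ring.lie_def]

variable (r s) in
noncomputable def topRightSum : (Fin r → Matrix (Fin (s + 1)) (Fin (s + 1)) ℝ) →ₗ[ℝ] ℝ :=
  ∑ m, entryLinearMap ℝ ℝ 0 (Fin.last s) ∘ₗ LinearMap.proj m

theorem topRightSum_apply (x : Fin r → Matrix (Fin (s + 1)) (Fin (s + 1)) ℝ) :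
    topRightSum r s x = ∑ m, x m 0 (Fin.last s) := by
  simp [topRightSum]

variable [NeZero r]

variable (r s) in
noncomputable def gen (i : Fin r) : Fin r → Matrix (Fin (s + 1)) (Fin (s + 1)) ℝ :=
  fun m => if i = m then J s else if i = m + 1 then E s 1 else 0

theorem gen_apply_self (m : Fin r) : gen r s m m = J s := if_pos rfl

theorem gen_add_one_apply (hr : 2 ≤ r) (m : Fin r) : gen r s (m + 1) m = E s 1 := by
  rw [gen, if_neg (Fin.add_one_ne_self hr m), if_pos rfl]

theorem gen_apply_of_ne {i m : Fin r} (h₁ : i ≠ m) (h₂ : i ≠ m + 1) : gen r s i m = 0 := by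
  rw [gen, if_neg h₁, if_neg h₂]

theorem adWord_apply (k : ℕ) (x : Fin r → Fin r → Matrix (Fin (s + 1)) (Fin (s + 1)) ℝ)
    (j m : Fin r) : adWord k x j m = (⁅x j m, ·⁆)^[k] (x (j + 1) m) :=
  map_adWord (f := fun u => u m) (fun u v => lie_apply u v m) k x j

theorem adWord_gen_apply_self (hr : 2 ≤ r) (hs : 3 ≤ s) (m : Fin r) :
    adWord (s - 2) (gen r s) m m = E s (s - 1) := by
  rw [adWord_apply, gen_apply_self, gen_add_one_apply hr, iterate_lie_J_E_one (by omega)]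
  congr 1
  omega

theorem adWord_gen_apply_of_ne (hr : 2 ≤ r) (hs : 3 ≤ s) (h : 3 ≤ r ∨ 4 ≤ s) {j m : Fin r}
    (hjm : j ≠ m) : adWord (s - 2) (gen r s) j m = 0 := by
  rw [adWord_apply]
  by_cases hj : j = m + 1
  · subst hj
    rw [gen_add_one_apply hr]
    by_cases hJ : m + 1 + 1 = m
    · have hs' : 4 ≤ s := h.resolve_left fun hr' => Fin.add_one_add_one_ne_self hr' m hJ
      rw [hJ, gen_apply_self]
      exact iterate_lie_E_one_J (by omega) (by omega)
    · rw [gen_apply_of_ne hJ (Fin.add_one_ne_self hr (m + 1))]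
      exact Function.iterate_fixed (lie_zero _) _
  · rw [gen_apply_of_ne hjm hj]
    obtain ⟨k, hk⟩ := Nat.exists_eq_add_of_le' (show 1 ≤ s - 2 by omega)
    rw [hk, Function.iterate_succ_apply', zero_lie]

theorem topRightSum_lie_gen_adWord (hr : 2 ≤ r) (hs : 3 ≤ s) (h : 3 ≤ r ∨ 4 ≤ s) (i j : Fin r) :
    topRightSum r s ⁅gen r s i, adWord (s - 2) (gen r s) j⁆ = if i = j then 1 else 0 := by
  have hsum : topRightSum r s ⁅gen r s i, adWord (s - 2) (gen r s) j⁆ =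
      ⁅gen r s i j, E s (s - 1)⁆ 0 (Fin.last s) := by
    simp only [topRightSum_apply, lie_apply]
    rw [Finset.sum_eq_single j, adWord_gen_apply_self hr hs]
    · intro m _ hmj
      rw [adWord_gen_apply_of_ne hr hs h (Ne.symm hmj), lie_zero, Matrix.zero_apply]
    · simp
  rw [hsum]
  split_ifs with hij
  · subst hij
    rw [gen_apply_self, lie_J_E (by omega), show s - 1 + 1 = s by omega, E, Fin.natCast_eq_last,
      single_apply_same]
  · by_cases hi : i = j + 1
    · rw [hi, gen_add_one_apply hr, lie_E_E (by omega) one_ne_zero (by omega) (by omega),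
        Matrix.zero_apply]
    · rw [gen_apply_of_ne hij hi, zero_lie, Matrix.zero_apply]

theorem gen_mem_strictUpperFiltration (hs : 1 ≤ s) (i : Fin r) :
    gen r s i ∈ strictUpperFiltration (Fin r) ℝ (s + 1) 0 := by
  intro m a b hab
  simp only [gen]
  split_ifs
  · rw [J, Matrix.neg_apply, Matrix.sum_apply, neg_eq_zero]
    refine Finset.sum_eq_zero fun k _ => single_apply_of_ne _ _ _ _ _ ?_
    rintro ⟨rfl, rfl⟩
    simp at hab
  · refine single_apply_of_ne _ _ _ _ _ ?_
    rintro ⟨rfl, rfl⟩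
    simp at hab
    omega
  · rfl

variable (r s) in
noncomputable def functional (hs : 1 ≤ s) : FreeNilpotentLie ℝ r s →ₗ[ℝ] ℝ :=
  (LieModule.lowerCentralSeries ℝ (FreeLieAlgebra ℝ (Fin r)) (FreeLieAlgebra ℝ (Fin r))
    s).toSubmodule.liftQ (topRightSum r s ∘ₗ (FreeLieAlgebra.lift ℝ (gen r s)).toLinearMap)
    fun z hz => by
      have h :=
        FreeLieAlgebra.lift_mem_strictUpperFiltration (gen_mem_strictUpperFiltration hs) s hz
      rw [strictUpperFiltration_eq_bot le_rfl, Submodule.mem_bot] at h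
      simp [h]

theorem functional_lie_gen_adWord (hr : 2 ≤ r) (hs : 3 ≤ s) (h : 3 ≤ r ∨ 4 ≤ s) (i j : Fin r) :
    functional r s (by omega) ⁅FreeNilpotentLie.gen ℝ r s i,
      adWord (s - 2) (FreeNilpotentLie.gen ℝ r s) j⁆ = if i = j then 1 else 0 := by
  set I := LieModule.lowerCentralSeries ℝ (FreeLieAlgebra ℝ (Fin r)) (FreeLieAlgebra ℝ (Fin r)) s
  have hmk : ⁅FreeNilpotentLie.gen ℝ r s i, adWord (s - 2) (FreeNilpotentLie.gen ℝ r s) j⁆ =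
      LieSubmodule.Quotient.mk' I
        ⁅FreeLieAlgebra.of ℝ i, adWord (s - 2) (FreeLieAlgebra.of ℝ) j⁆ := by
    rw [LieModuleHom.map_lie, map_adWord (f := LieSubmodule.Quotient.mk' I) fun _ _ => rfl]
    rfl
  have hlift : FreeLieAlgebra.lift ℝ (gen r s)
      ⁅FreeLieAlgebra.of ℝ i, adWord (s - 2) (FreeLieAlgebra.of ℝ) j⁆ =
      ⁅gen r s i, adWord (s - 2) (gen r s) j⁆ := by
    rw [LieHom.map_lie, map_adWord (LieHom.map_lie _), FreeLieAlgebra.of_comp_lift,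
      FreeLieAlgebra.lift_of_apply]
  rw [hmk, ← topRightSum_lie_gen_adWord hr hs h, ← hlift]
  rfl

end FiliformModel

theorem FreeNilpotentLie.exists_surjective_bracketMap {r s : ℕ} (hr : 2 ≤ r) (hs : 3 ≤ s)
    (h : 3 ≤ r ∨ 4 ≤ s) :
    ∃ p : FreeNilpotentLie ℝ r s →ₗ[ℝ] ℝ, Function.Surjective (bracketMap (gen ℝ r s)
      (LieModule.lowerCentralSeries ℝ (FreeNilpotentLie ℝ r s) (FreeNilpotentLie ℝ r s)
        (s - 2)).toSubmodule p) := by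
  have : NeZero r := ⟨by omega⟩
  refine ⟨FiliformModel.functional r s (by omega),
    (LinearMap.surjective_iff_exists_det_ne_zero _).2
      ⟨fun j => ⟨adWord (s - 2) (gen ℝ r s) j, adWord_mem_lowerCentralSeries _ _ j⟩, ?_⟩⟩
  convert one_ne_zero (α := ℝ)
  rw [← Matrix.det_one (n := Fin r)]
  congr 1
  ext i j
  simp [bracketMap, FiliformModel.functional_lie_gen_adWord hr hs h, Matrix.one_apply]

/-- Let `L` be the free nilpotent Lie algebra over `ℝ` of rank `r ≥ 2` and
step `s ≥ 3`, with `r ≥ 3` or `s ≥ 4`, and fix a basis `b` of `L` indexed by `Fin N`.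
For `c ∈ ℝ^N` let `p_c ∈ L*` be the functional with `p_c (b k) = c k`.  Then the set of
`c ∈ ℝ^N` for which `η ↦ (p_c ⁅X_1, η⁆, …, p_c ⁅X_r, η⁆)`, defined on `C_{s-2}(L)`,
is surjective onto `ℝ^r` is open and dense. -/
theorem B1_surjective_openDense
    (r s : ℕ) (hr : 2 ≤ r) (hs : 3 ≤ s) (h : 3 ≤ r ∨ 4 ≤ s)
    (N : ℕ) (b : Module.Basis (Fin N) ℝ (FreeNilpotentLie ℝ r s)) :
    IsOpen {c : Fin N → ℝ |
        ∀ d : Fin r → ℝ,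
          ∃ η ∈ LieModule.lowerCentralSeries ℝ (FreeNilpotentLie ℝ r s)
            (FreeNilpotentLie ℝ r s) (s - 2),
            ∀ i : Fin r, (b.constr ℝ c) ⁅FreeNilpotentLie.gen ℝ r s i, η⁆ = d i} ∧
    Dense {c : Fin N → ℝ |
        ∀ d : Fin r → ℝ,
          ∃ η ∈ LieModule.lowerCentralSeries ℝ (FreeNilpotentLie ℝ r s)
            (FreeNilpotentLie ℝ r s) (s - 2),
            ∀ i : Fin r, (b.constr ℝ c) ⁅FreeNilpotentLie.gen ℝ r s i, η⁆ = d i} := by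
  set T := bracketMap (FreeNilpotentLie.gen ℝ r s) (LieModule.lowerCentralSeries ℝ
    (FreeNilpotentLie ℝ r s) (FreeNilpotentLie ℝ r s) (s - 2)).toSubmodule ∘ₗ
      (b.constr ℝ).toLinearMap
  have hT : ∀ c, Function.Surjective (T c) ↔ ∀ d : Fin r → ℝ,
      ∃ η ∈ LieModule.lowerCentralSeries ℝ (FreeNilpotentLie ℝ r s)
          (FreeNilpotentLie ℝ r s) (s - 2),
        ∀ i : Fin r, (b.constr ℝ c) ⁅FreeNilpotentLie.gen ℝ r s i, η⁆ = d i :=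
    fun c => surjective_bracketMap_iff _ _ _
  simp only [← hT]
  obtain ⟨p, hp⟩ := FreeNilpotentLie.exists_surjective_bracketMap hr hs h
  refine ⟨isOpen_setOf_surjective T, dense_setOf_surjective T (c₀ := fun k => p (b k)) ?_⟩
  simpa [T, b.constr_self] using hp
end

section
/- Let K be a field of characteristic zero, r ≥ 2, and let L be the free nilpotent Lie algebra of rank r and step 3 over K, with G_1 the span of the generators. Fix p ∈ L* and set h_1(p) = {ξ ∈ G_1 : p(⁅ξ,η⁆) = 0 for all η ∈ C_1(L)}. If γ ∈ h_1(p) satisfies p(⁅δ,γ⁆) = 0 for all δ ∈ h_1(p), then there exists η ∈ C_1(L) such that p(⁅ξ,γ⁆) = p(⁅ξ,η⁆) for all ξ ∈ G_1. (That is, B_p(·,γ)|_{G_1} lies in the image of the map B_p^{12} : C_1(L) → G_1*.) -/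
/-!
Only linear algebra is needed. Restricting `B_p` to `G₁ × C₁(L)` gives a map `C₁(L) → G₁*`;
since `G₁` is finite-dimensional, its image is the annihilator of its common kernel
`{δ ∈ G₁ : p ⁅δ, η⁆ = 0 for all η ∈ C₁(L)} = h₁(p)`. The hypothesis says exactly that
`B_p(·, γ)` vanishes on `h₁(p)`.
-/

section

variable {K V W M N : Type*} [Field K]

theorem LinearMap.mem_range_of_forall_apply_eq_zero [AddCommGroup V] [Module K V]
    [FiniteDimensional K V] [AddCommGroup W] [Module K W]
    (T : W →ₗ[K] Module.Dual K V) (f : Module.Dual K V)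
    (hf : ∀ v, (∀ w, T w v = 0) → f v = 0) : f ∈ LinearMap.range T := by
  rw [← Subspace.dualCoannihilator_dualAnnihilator_eq (W := LinearMap.range T),
    Submodule.mem_dualAnnihilator]
  intro v hv
  rw [Submodule.mem_dualCoannihilator] at hv
  exact hf v fun w => hv (T w) ⟨w, rfl⟩

theorem LinearMap.exists_mem_forall_eq_of_leftOrthogonal [AddCommGroup M] [Module K M]
    [AddCommGroup N] [Module K N] (B : M →ₗ[K] N →ₗ[K] K) (V : Submodule K M)
    [FiniteDimensional K V] (W : Submodule K N) (φ : Module.Dual K M)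
    (hφ : ∀ v ∈ V, (∀ w ∈ W, B v w = 0) → φ v = 0) :
    ∃ w ∈ W, ∀ v ∈ V, φ v = B v w := by
  let T : W →ₗ[K] Module.Dual K V := (B.flip.domRestrict W).compl₂ V.subtype
  obtain ⟨w, hw⟩ := T.mem_range_of_forall_apply_eq_zero (φ.comp V.subtype)
    fun v hv => hφ v v.2 fun w hw => hv ⟨w, hw⟩
  exact ⟨w, w.2, fun v hv => (LinearMap.congr_fun hw ⟨v, hv⟩).symm⟩

end

theorem Bp_gamma_mem_image_B12_general
    (K : Type*) [Field K] (r : ℕ)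
    (p : Module.Dual K (FreeNilpotentLie K r 3))
    (γ : FreeNilpotentLie K r 3)
    (hγ3 : ∀ δ, δ ∈ FreeNilpotentLie.G1 K r 3 →
      (∀ η ∈ LieModule.lowerCentralSeries K (FreeNilpotentLie K r 3)
        (FreeNilpotentLie K r 3) 1, p ⁅δ, η⁆ = 0) → p ⁅δ, γ⁆ = 0) :
    ∃ η ∈ LieModule.lowerCentralSeries K (FreeNilpotentLie K r 3)
      (FreeNilpotentLie K r 3) 1,
      ∀ ξ ∈ FreeNilpotentLie.G1 K r 3, p ⁅ξ, γ⁆ = p ⁅ξ, η⁆ := by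
  have : FiniteDimensional K (FreeNilpotentLie.G1 K r 3) :=
    FiniteDimensional.span_of_finite K (Set.finite_range _)
  let B := (LieModule.toEnd K (FreeNilpotentLie K r 3) (FreeNilpotentLie K r 3) :
    FreeNilpotentLie K r 3 →ₗ[K] Module.End K (FreeNilpotentLie K r 3)).compr₂ p
  exact B.exists_mem_forall_eq_of_leftOrthogonal _ _ (B.flip γ) hγ3

/-- Let `L` be the free nilpotent Lie algebra of rank `r ≥ 2` and step 3,
`p ∈ L*`, and `γ ∈ h₁(p) = {ξ ∈ G₁ : p ⁅ξ, η⁆ = 0 ∀ η ∈ C₁(L)}`.  If `p ⁅δ, γ⁆ = 0` for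
all `δ ∈ h₁(p)`, then `B_p(·, γ)|_{G₁}` lies in the image of `B_p^{12} : C₁(L) → G₁*`. -/
theorem Bp_gamma_mem_image_B12
    (K : Type*) [Field K] [CharZero K] (r : ℕ) (hr : 2 ≤ r)
    (p : Module.Dual K (FreeNilpotentLie K r 3))
    (γ : FreeNilpotentLie K r 3)
    (hγ1 : γ ∈ FreeNilpotentLie.G1 K r 3)
    (hγ2 : ∀ η ∈ LieModule.lowerCentralSeries K (FreeNilpotentLie K r 3)
      (FreeNilpotentLie K r 3) 1, p ⁅γ, η⁆ = 0)
    (hγ3 : ∀ δ, δ ∈ FreeNilpotentLie.G1 K r 3 →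
      (∀ η ∈ LieModule.lowerCentralSeries K (FreeNilpotentLie K r 3)
        (FreeNilpotentLie K r 3) 1, p ⁅δ, η⁆ = 0) → p ⁅δ, γ⁆ = 0) :
    ∃ η ∈ LieModule.lowerCentralSeries K (FreeNilpotentLie K r 3)
      (FreeNilpotentLie K r 3) 1,
      ∀ ξ ∈ FreeNilpotentLie.G1 K r 3, p ⁅ξ, γ⁆ = p ⁅ξ, η⁆ :=
  Bp_gamma_mem_image_B12_general K r p γ hγ3
end

section
/- Let K be a field of characteristic zero, r ≥ 2, and let L be the free nilpotent Lie algebra of rank r and step 3 over K, with G_1 the span of the generators. Fix p ∈ L* and let γ_1, γ_2 ∈ h_1(p) = {ξ ∈ G_1 : p(⁅ξ,η⁆) = 0 for all η ∈ C_1(L)}. Then for every q ∈ L* that agrees with p on C_2(L) and every x ∈ L, one has q(⁅x, ⁅γ_1, γ_2⁆⁆) = 0. (That is, the linear functions corresponding to elements of h_2 = ⁅h_1, h_1⁆ have vanishing Poisson bracket with every element of L at all points of the joint level set of the linear Casimir functions through p.) -/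
/-- Let `L` be the free nilpotent Lie algebra of rank `r ≥ 2` and step 3,
`p ∈ L*` and `γ₁, γ₂ ∈ h₁(p)`.  Then for every `q ∈ L*` agreeing with `p` on `C₂(L)`
and every `x ∈ L`, `q ⁅x, ⁅γ₁, γ₂⁆⁆ = 0`. -/
theorem h2_brackets_vanish_on_level_set
    (K : Type*) [Field K] [CharZero K] (r : ℕ) (hr : 2 ≤ r)
    (p : Module.Dual K (FreeNilpotentLie K r 3))
    (γ₁ γ₂ : FreeNilpotentLie K r 3)
    (hγ₁1 : γ₁ ∈ FreeNilpotentLie.G1 K r 3)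
    (hγ₁2 : ∀ η ∈ LieModule.lowerCentralSeries K (FreeNilpotentLie K r 3)
      (FreeNilpotentLie K r 3) 1, p ⁅γ₁, η⁆ = 0)
    (hγ₂1 : γ₂ ∈ FreeNilpotentLie.G1 K r 3)
    (hγ₂2 : ∀ η ∈ LieModule.lowerCentralSeries K (FreeNilpotentLie K r 3)
      (FreeNilpotentLie K r 3) 1, p ⁅γ₂, η⁆ = 0) :
    ∀ q : Module.Dual K (FreeNilpotentLie K r 3),
      (∀ w ∈ LieModule.lowerCentralSeries K (FreeNilpotentLie K r 3)
        (FreeNilpotentLie K r 3) 2, p w = q w) →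
      ∀ x : FreeNilpotentLie K r 3, q ⁅x, ⁅γ₁, γ₂⁆⁆ = 0 := by
  intro q hq x
  have e1 := LieModule.lowerCentralSeries_succ K (FreeNilpotentLie K r 3)
    (FreeNilpotentLie K r 3) 0
  have e2 := LieModule.lowerCentralSeries_succ K (FreeNilpotentLie K r 3)
    (FreeNilpotentLie K r 3) 1
  have mem1 : ∀ a b : FreeNilpotentLie K r 3,
      ⁅a, b⁆ ∈ LieModule.lowerCentralSeries K (FreeNilpotentLie K r 3)
        (FreeNilpotentLie K r 3) 1 := by
    intro a b
    rw [e1]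
    exact LieSubmodule.lie_mem_lie (LieSubmodule.mem_top a) (LieSubmodule.mem_top b)
  have hx : ⁅x, ⁅γ₁, γ₂⁆⁆ ∈ LieModule.lowerCentralSeries K (FreeNilpotentLie K r 3)
      (FreeNilpotentLie K r 3) 2 := by
    rw [e2]
    exact LieSubmodule.lie_mem_lie (LieSubmodule.mem_top x) (mem1 γ₁ γ₂)
  rw [← hq _ hx]
  have jac : ⁅x, ⁅γ₁, γ₂⁆⁆ = ⁅⁅x, γ₁⁆, γ₂⁆ + ⁅γ₁, ⁅x, γ₂⁆⁆ := leibniz_lie x γ₁ γ₂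
  have skew : ⁅⁅x, γ₁⁆, γ₂⁆ = -⁅γ₂, ⁅x, γ₁⁆⁆ := (lie_skew ⁅x, γ₁⁆ γ₂).symm
  rw [jac, skew, map_add, map_neg, hγ₂2 _ (mem1 x γ₁), hγ₁2 _ (mem1 x γ₂), neg_zero, zero_add]
end

section
/- Let K be a field of characteristic zero and let L be the free nilpotent Lie algebra of rank 2 and step 4 over K with generators x_1, x_2; set x_{12} = ⁅x_1,x_2⁆, x_{112} = ⁅x_1,x_{12}⁆, x_{212} = ⁅x_2,x_{12}⁆, x_{1112} = ⁅x_1,x_{112}⁆, x_{1212} = ⁅x_1,x_{212}⁆ (= ⁅x_2,x_{112}⁆), x_{2212} = ⁅x_2,x_{212}⁆. Then the cubic function F(p) = p(x_{12})(p(x_{1112})p(x_{2212}) − p(x_{1212})²) − ½ p(x_{2212})p(x_{112})² − ½ p(x_{1112})p(x_{212})² + p(x_{1212})p(x_{112})p(x_{212}) on L* is infinitesimally invariant under the coadjoint representation: for every p ∈ L* and v ∈ L, setting q(w) = p(⁅v,w⁆), one has q(x_{12})(p(x_{1112})p(x_{2212}) − p(x_{1212})²) + p(x_{12})(q(x_{1112})p(x_{2212})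 + p(x_{1112})q(x_{2212}) − 2p(x_{1212})q(x_{1212})) − ½ q(x_{2212})p(x_{112})² − p(x_{2212})p(x_{112})q(x_{112}) − ½ q(x_{1112})p(x_{212})² − p(x_{1112})p(x_{212})q(x_{212}) + q(x_{1212})p(x_{112})p(x_{212}) + p(x_{1212})(q(x_{112})p(x_{212}) + p(x_{112})q(x_{212})) = 0. (Thus F is a Casimir function of the free Carnot group of rank 2 and step 4, quadratic on joint level sets of the linear Casimir functions.) -/
namespace Rank2Step4

variable (K : Type*) [Field K]

noncomputable def x1 : FreeNilpotentLie K 2 4 := FreeNilpotentLie.gen K 2 4 0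
noncomputable def x2 : FreeNilpotentLie K 2 4 := FreeNilpotentLie.gen K 2 4 1
noncomputable def x12 : FreeNilpotentLie K 2 4 := ⁅x1 K, x2 K⁆
noncomputable def x112 : FreeNilpotentLie K 2 4 := ⁅x1 K, x12 K⁆
noncomputable def x212 : FreeNilpotentLie K 2 4 := ⁅x2 K, x12 K⁆
noncomputable def x1112 : FreeNilpotentLie K 2 4 := ⁅x1 K, x112 K⁆
noncomputable def x1212 : FreeNilpotentLie K 2 4 := ⁅x1 K, x212 K⁆
noncomputable def x2212 : FreeNilpotentLie K 2 4 := ⁅x2 K, x212 K⁆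

end Rank2Step4


namespace CasimirAux

variable (K : Type*) [Field K]

local notation "F" => FreeLieAlgebra K (Fin 2)
local notation "lcs" => LieModule.lowerCentralSeries K (FreeLieAlgebra K (Fin 2)) (FreeLieAlgebra K (Fin 2))

/-- the quotient map as a Lie algebra hom -/
noncomputable def pr : FreeLieAlgebra K (Fin 2) →ₗ⁅K⁆ FreeNilpotentLie K 2 4 where
  toLinearMap := (LieSubmodule.Quotient.mk' (LieModule.lowerCentralSeries K
    (FreeLieAlgebra K (Fin 2)) (FreeLieAlgebra K (Fin 2)) 4)).toLinearMap
  map_lie' := by intro x y; rfl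

lemma pr_surjective : Function.Surjective (pr K) :=
  LieSubmodule.Quotient.surjective_mk' _

lemma lcs_lie_lcs {R L : Type*} [CommRing R] [LieRing L] [LieAlgebra R L] :
    ∀ (a b : ℕ) (u w : L), u ∈ LieModule.lowerCentralSeries R L L a →
      w ∈ LieModule.lowerCentralSeries R L L b →
      ⁅u, w⁆ ∈ LieModule.lowerCentralSeries R L L (a + b + 1) := by
  intro a
  induction a with
  | zero =>
    intro b u w _ hw
    rw [Nat.zero_add, LieModule.lowerCentralSeries_succ]
    exact LieSubmodule.lie_mem_lie (LieSubmodule.mem_top u) hw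
  | succ a ih =>
    intro b u w hu hw
    rw [LieModule.lowerCentralSeries_succ] at hu
    rw [← LieSubmodule.mem_toSubmodule, LieSubmodule.lieIdeal_oper_eq_linear_span'] at hu
    induction hu using Submodule.span_induction with
    | mem z hz =>
      obtain ⟨x, -, n, hn, rfl⟩ := hz
      rw [lie_lie]
      have h1 : ⁅x, ⁅n, w⁆⁆ ∈ LieModule.lowerCentralSeries R L L (a + b + 1 + 1) := by
        rw [LieModule.lowerCentralSeries_succ]
        exact LieSubmodule.lie_mem_lie (LieSubmodule.mem_top x) (ih b n w hn hw)
      have h2 : ⁅n, ⁅x, w⁆⁆ ∈ LieModule.lowerCentralSeries R L L (a + (b + 1) + 1) := by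
        refine ih (b + 1) n _ hn ?_
        rw [LieModule.lowerCentralSeries_succ]
        exact LieSubmodule.lie_mem_lie (LieSubmodule.mem_top x) hw
      have e1 : a + b + 1 + 1 = a + 1 + b + 1 := by omega
      have e2 : a + (b + 1) + 1 = a + 1 + b + 1 := by omega
      rw [e1] at h1; rw [e2] at h2
      exact sub_mem h1 h2
    | zero => simp
    | add y z hy hz ihy ihz => rw [add_lie]; exact add_mem ihy ihz
    | smul c y hy ihy => rw [smul_lie]; exact Submodule.smul_mem _ c ihy

lemma pr_lie_pr_eq_zero {a b : ℕ} (hab : 3 ≤ a + b) {u w : F}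
    (hu : u ∈ lcs a) (hw : w ∈ lcs b) : ⁅pr K u, pr K w⁆ = 0 := by
  rw [← LieHom.map_lie]
  have h : ⁅u, w⁆ ∈ lcs 4 := by
    refine LieModule.antitone_lowerCentralSeries K _ _ (show 4 ≤ a + b + 1 by omega)
      (lcs_lie_lcs a b u w hu hw)
  exact (LieSubmodule.Quotient.mk_eq_zero _).mpr h

lemma lie_pr_eq_zero {w : F} (hw : w ∈ lcs 3) (v : FreeNilpotentLie K 2 4) :
    ⁅v, pr K w⁆ = 0 := by
  obtain ⟨u, rfl⟩ := pr_surjective K v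
  refine pr_lie_pr_eq_zero K (a := 0) (b := 3) (by omega) ?_ hw
  rw [LieModule.lowerCentralSeries_zero]; exact LieSubmodule.mem_top u

lemma pr_lie_eq_zero {w : F} (hw : w ∈ lcs 3) (v : FreeNilpotentLie K 2 4) :
    ⁅pr K w, v⁆ = 0 := by
  rw [← lie_skew, lie_pr_eq_zero K hw v, neg_zero]

end CasimirAux


open Rank2Step4

namespace CasimirAux

variable (K : Type*) [Field K]

local notation "FL" => FreeLieAlgebra K (Fin 2)
local notation "lcs" => LieModule.lowerCentralSeries K (FreeLieAlgebra K (Fin 2)) (FreeLieAlgebra K (Fin 2))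

noncomputable def y1 : FreeLieAlgebra K (Fin 2) := FreeLieAlgebra.of K (0 : Fin 2)
noncomputable def y2 : FreeLieAlgebra K (Fin 2) := FreeLieAlgebra.of K (1 : Fin 2)
noncomputable def y12 : FreeLieAlgebra K (Fin 2) := ⁅y1 K, y2 K⁆
noncomputable def y112 : FreeLieAlgebra K (Fin 2) := ⁅y1 K, y12 K⁆
noncomputable def y212 : FreeLieAlgebra K (Fin 2) := ⁅y2 K, y12 K⁆
noncomputable def y1112 : FreeLieAlgebra K (Fin 2) := ⁅y1 K, y112 K⁆
noncomputable def y1212 : FreeLieAlgebra K (Fin 2) := ⁅y1 K, y212 K⁆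
noncomputable def y2212 : FreeLieAlgebra K (Fin 2) := ⁅y2 K, y212 K⁆

lemma mem_lcs_succ {n : ℕ} {w : FreeLieAlgebra K (Fin 2)} (u : FreeLieAlgebra K (Fin 2))
    (hw : w ∈ lcs n) : ⁅u, w⁆ ∈ lcs (n + 1) := by
  rw [LieModule.lowerCentralSeries_succ]
  exact LieSubmodule.lie_mem_lie (LieSubmodule.mem_top u) hw

lemma m12 : y12 K ∈ lcs 1 := mem_lcs_succ K _ (by
  rw [LieModule.lowerCentralSeries_zero]; exact LieSubmodule.mem_top _)
lemma m112 : y112 K ∈ lcs 2 := mem_lcs_succ K _ (m12 K)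
lemma m212 : y212 K ∈ lcs 2 := mem_lcs_succ K _ (m12 K)
lemma m1112 : y1112 K ∈ lcs 3 := mem_lcs_succ K _ (m112 K)
lemma m1212 : y1212 K ∈ lcs 3 := mem_lcs_succ K _ (m212 K)
lemma m2212 : y2212 K ∈ lcs 3 := mem_lcs_succ K _ (m212 K)



section QLemmas
variable {K}
lemma qlie_zero (x : FreeNilpotentLie K 2 4) : ⁅x, (0 : FreeNilpotentLie K 2 4)⁆ = 0 := lie_zero x
lemma qzero_lie (x : FreeNilpotentLie K 2 4) : ⁅(0 : FreeNilpotentLie K 2 4), x⁆ = 0 := zero_lie x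
lemma qadd_lie (x y z : FreeNilpotentLie K 2 4) : ⁅x + y, z⁆ = ⁅x, z⁆ + ⁅y, z⁆ := add_lie x y z
lemma qlie_add (x y z : FreeNilpotentLie K 2 4) : ⁅x, y + z⁆ = ⁅x, y⁆ + ⁅x, z⁆ := lie_add x y z
lemma qsmul_lie (c : K) (x z : FreeNilpotentLie K 2 4) : ⁅c • x, z⁆ = c • ⁅x, z⁆ := smul_lie c x z
lemma qlie_smul (c : K) (x z : FreeNilpotentLie K 2 4) : ⁅x, c • z⁆ = c • ⁅x, z⁆ := lie_smul c x z
lemma qneg_lie (x y : FreeNilpotentLie K 2 4) : ⁅-x, y⁆ = -⁅x, y⁆ := neg_lie x y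
lemma qlie_self (x : FreeNilpotentLie K 2 4) : ⁅x, x⁆ = 0 := lie_self x
lemma qlie_skew (x y : FreeNilpotentLie K 2 4) : ⁅x, y⁆ = -⁅y, x⁆ := (lie_skew x y).symm
end QLemmas

lemma px1 : x1 K = pr K (y1 K) := rfl
lemma px2 : x2 K = pr K (y2 K) := rfl
lemma px12 : x12 K = pr K (y12 K) := rfl
lemma px112 : x112 K = pr K (y112 K) := rfl
lemma px212 : x212 K = pr K (y212 K) := rfl
lemma px1112 : x1112 K = pr K (y1112 K) := rfl
lemma px1212 : x1212 K = pr K (y1212 K) := rfl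
lemma px2212 : x2212 K = pr K (y2212 K) := rfl

-- degree ≥ 5 vanishing, quotient-side statements
lemma z1112 (v : FreeNilpotentLie K 2 4) : ⁅v, x1112 K⁆ = 0 := by
  rw [px1112]; exact lie_pr_eq_zero K (m1112 K) v
lemma z1212 (v : FreeNilpotentLie K 2 4) : ⁅v, x1212 K⁆ = 0 := by
  rw [px1212]; exact lie_pr_eq_zero K (m1212 K) v
lemma z2212 (v : FreeNilpotentLie K 2 4) : ⁅v, x2212 K⁆ = 0 := by
  rw [px2212]; exact lie_pr_eq_zero K (m2212 K) v
lemma z1112' (v : FreeNilpotentLie K 2 4) : ⁅x1112 K, v⁆ = 0 := by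
  rw [px1112]; exact pr_lie_eq_zero K (m1112 K) v
lemma z1212' (v : FreeNilpotentLie K 2 4) : ⁅x1212 K, v⁆ = 0 := by
  rw [px1212]; exact pr_lie_eq_zero K (m1212 K) v
lemma z2212' (v : FreeNilpotentLie K 2 4) : ⁅x2212 K, v⁆ = 0 := by
  rw [px2212]; exact pr_lie_eq_zero K (m2212 K) v

lemma z12_112 : ⁅x12 K, x112 K⁆ = 0 := by
  rw [px12, px112]; exact pr_lie_pr_eq_zero K (by omega) (m12 K) (m112 K)
lemma z12_212 : ⁅x12 K, x212 K⁆ = 0 := by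
  rw [px12, px212]; exact pr_lie_pr_eq_zero K (by omega) (m12 K) (m212 K)
lemma z112_12 : ⁅x112 K, x12 K⁆ = 0 := by
  rw [px12, px112]; exact pr_lie_pr_eq_zero K (by omega) (m112 K) (m12 K)
lemma z212_12 : ⁅x212 K, x12 K⁆ = 0 := by
  rw [px12, px212]; exact pr_lie_pr_eq_zero K (by omega) (m212 K) (m12 K)
lemma z112_212 : ⁅x112 K, x212 K⁆ = 0 := by
  rw [px112, px212]; exact pr_lie_pr_eq_zero K (by omega) (m112 K) (m212 K)
lemma z212_112 : ⁅x212 K, x112 K⁆ = 0 := by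
  rw [px112, px212]; exact pr_lie_pr_eq_zero K (by omega) (m212 K) (m112 K)

-- the Jacobi identity computation
lemma jacobi2112 : ⁅x2 K, x112 K⁆ = x1212 K := by
  have h : ⁅x2 K, x112 K⁆ = ⁅⁅x2 K, x1 K⁆, x12 K⁆ + ⁅x1 K, ⁅x2 K, x12 K⁆⁆ :=
    leibniz_lie (x2 K) (x1 K) (x12 K)
  have h2 : ⁅x2 K, x1 K⁆ = -(x12 K) := by rw [qlie_skew]; rfl
  rw [h, h2, qneg_lie, qlie_self, neg_zero, zero_add]; rfl

noncomputable def Sset : Set (FreeNilpotentLie K 2 4) :=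
  {x1 K, x2 K, x12 K, x112 K, x212 K, x1112 K, x1212 K, x2212 K}

lemma lie_table : ∀ x ∈ Sset K, ∀ y ∈ Sset K, ⁅x, y⁆ ∈ Submodule.span K (Sset K) := by
  have hm : ∀ z ∈ Sset K, z ∈ Submodule.span K (Sset K) := fun z hz => Submodule.subset_span hz
  have h1 : x1 K ∈ Sset K := by simp [Sset]
  have h2 : x2 K ∈ Sset K := by simp [Sset]
  have h3 : x12 K ∈ Sset K := by simp [Sset]
  have h4 : x112 K ∈ Sset K := by simp [Sset]
  have h5 : x212 K ∈ Sset K := by simp [Sset]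
  have h6 : x1112 K ∈ Sset K := by simp [Sset]
  have h7 : x1212 K ∈ Sset K := by simp [Sset]
  have h8 : x2212 K ∈ Sset K := by simp [Sset]
  intro x hx y hy
  simp only [Sset, Set.mem_insert_iff, Set.mem_singleton_iff] at hx hy
  rcases hx with rfl|rfl|rfl|rfl|rfl|rfl|rfl|rfl
  · rcases hy with rfl|rfl|rfl|rfl|rfl|rfl|rfl|rfl
    · rw [qlie_self]; exact zero_mem _
    · exact hm _ h3
    · exact hm _ h4
    · exact hm _ h6
    · exact hm _ h7
    · rw [z1112]; exact zero_mem _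
    · rw [z1212]; exact zero_mem _
    · rw [z2212]; exact zero_mem _
  · rcases hy with rfl|rfl|rfl|rfl|rfl|rfl|rfl|rfl
    · rw [show ⁅x2 K, x1 K⁆ = -(x12 K) by rw [qlie_skew]; rfl]
      exact neg_mem (hm _ h3)
    · rw [qlie_self]; exact zero_mem _
    · exact hm _ h5
    · rw [jacobi2112]; exact hm _ h7
    · exact hm _ h8
    · rw [z1112]; exact zero_mem _
    · rw [z1212]; exact zero_mem _
    · rw [z2212]; exact zero_mem _
  · rcases hy with rfl|rfl|rfl|rfl|rfl|rfl|rfl|rfl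
    · rw [show ⁅x12 K, x1 K⁆ = -(x112 K) by rw [qlie_skew]; rfl]
      exact neg_mem (hm _ h4)
    · rw [show ⁅x12 K, x2 K⁆ = -(x212 K) by rw [qlie_skew]; rfl]
      exact neg_mem (hm _ h5)
    · rw [qlie_self]; exact zero_mem _
    · rw [z12_112]; exact zero_mem _
    · rw [z12_212]; exact zero_mem _
    · rw [z1112]; exact zero_mem _
    · rw [z1212]; exact zero_mem _
    · rw [z2212]; exact zero_mem _
  · rcases hy with rfl|rfl|rfl|rfl|rfl|rfl|rfl|rfl
    · rw [show ⁅x112 K, x1 K⁆ = -(x1112 K) by rw [qlie_skew]; rfl]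
      exact neg_mem (hm _ h6)
    · rw [show ⁅x112 K, x2 K⁆ = -(x1212 K) by rw [qlie_skew, jacobi2112]]
      exact neg_mem (hm _ h7)
    · rw [z112_12]; exact zero_mem _
    · rw [qlie_self]; exact zero_mem _
    · rw [z112_212]; exact zero_mem _
    · rw [z1112]; exact zero_mem _
    · rw [z1212]; exact zero_mem _
    · rw [z2212]; exact zero_mem _
  · rcases hy with rfl|rfl|rfl|rfl|rfl|rfl|rfl|rfl
    · rw [show ⁅x212 K, x1 K⁆ = -(x1212 K) by rw [qlie_skew]; rfl]
      exact neg_mem (hm _ h7)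
    · rw [show ⁅x212 K, x2 K⁆ = -(x2212 K) by rw [qlie_skew]; rfl]
      exact neg_mem (hm _ h8)
    · rw [z212_12]; exact zero_mem _
    · rw [z212_112]; exact zero_mem _
    · rw [qlie_self]; exact zero_mem _
    · rw [z1112]; exact zero_mem _
    · rw [z1212]; exact zero_mem _
    · rw [z2212]; exact zero_mem _
  · rw [z1112']; exact zero_mem _
  · rw [z1212']; exact zero_mem _
  · rw [z2212']; exact zero_mem _

noncomputable def A : LieSubalgebra K (FreeNilpotentLie K 2 4) :=
  { Submodule.span K (Sset K) with
    lie_mem' := by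
      intro x y hx hy
      replace hx : x ∈ Submodule.span K (Sset K) := hx
      replace hy : y ∈ Submodule.span K (Sset K) := hy
      show ⁅x, y⁆ ∈ Submodule.span K (Sset K)
      have key : ∀ x ∈ Sset K, ∀ y ∈ Submodule.span K (Sset K),
          ⁅x, y⁆ ∈ Submodule.span K (Sset K) := by
        intro x hxS y hy
        induction hy using Submodule.span_induction with
        | mem z hz => exact lie_table K x hxS z hz
        | zero => rw [qlie_zero]; exact zero_mem _
        | add a b _ _ iha ihb => rw [qlie_add]; exact add_mem iha ihb
        | smul c a _ iha => rw [qlie_smul]; exact Submodule.smul_mem _ c iha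
      induction hx using Submodule.span_induction with
      | mem z hz => exact key z hz y hy
      | zero => rw [qzero_lie]; exact zero_mem _
      | add a b _ _ iha ihb => rw [qadd_lie]; exact add_mem iha ihb
      | smul c a _ iha => rw [qsmul_lie]; exact Submodule.smul_mem _ c iha }

lemma mem_span_Sset (v : FreeNilpotentLie K 2 4) : v ∈ Submodule.span K (Sset K) := by
  have hg : ∀ i : Fin 2, FreeNilpotentLie.gen K 2 4 i ∈ A K := by
    intro i
    fin_cases i
    · exact Submodule.subset_span (by simp [Sset, x1])
    · exact Submodule.subset_span (by simp [Sset, x2])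
  let g : FreeLieAlgebra K (Fin 2) →ₗ⁅K⁆ A K :=
    FreeLieAlgebra.lift K fun i => (⟨FreeNilpotentLie.gen K 2 4 i, hg i⟩ : A K)
  have hcomp : (A K).incl.comp g = pr K := by
    apply FreeLieAlgebra.hom_ext
    intro i
    simp only [LieHom.comp_apply, g, FreeLieAlgebra.lift_of_apply]
    rfl
  obtain ⟨u, rfl⟩ := pr_surjective K v
  rw [← hcomp]
  exact (g u).2

end CasimirAux

open Rank2Step4 in
/-- On the free nilpotent Lie algebra of rank 2 and step 4, the cubic
function
`F(p) = p(x₁₂)(p(x₁₁₁₂)p(x₂₂₁₂) − p(x₁₂₁₂)²) − ½ p(x₂₂₁₂)p(x₁₁₂)² − ½ p(x₁₁₁₂)p(x₂₁₂)²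
+ p(x₁₂₁₂)p(x₁₁₂)p(x₂₁₂)`
is infinitesimally invariant under the coadjoint representation: its directional derivative
along `q(w) = p ⁅v, w⁆` vanishes for every `p ∈ L*` and `v ∈ L`. -/
theorem rank2_step4_cubic_casimir
    (K : Type*) [Field K] [CharZero K]
    (p : Module.Dual K (FreeNilpotentLie K 2 4)) (v : FreeNilpotentLie K 2 4) :
    p ⁅v, x12 K⁆ * (p (x1112 K) * p (x2212 K) - p (x1212 K) ^ 2) +
      p (x12 K) * (p ⁅v, x1112 K⁆ * p (x2212 K) + p (x1112 K) * p ⁅v, x2212 K⁆ -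
        2 * p (x1212 K) * p ⁅v, x1212 K⁆) -
      (1 / 2 : K) * p ⁅v, x2212 K⁆ * p (x112 K) ^ 2 -
      p (x2212 K) * p (x112 K) * p ⁅v, x112 K⁆ -
      (1 / 2 : K) * p ⁅v, x1112 K⁆ * p (x212 K) ^ 2 -
      p (x1112 K) * p (x212 K) * p ⁅v, x212 K⁆ +
      p ⁅v, x1212 K⁆ * p (x112 K) * p (x212 K) +
      p (x1212 K) * (p ⁅v, x112 K⁆ * p (x212 K) + p (x112 K) * p ⁅v, x212 K⁆) = 0 := by
  have hv := CasimirAux.mem_span_Sset K v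
  induction hv using Submodule.span_induction with
  | mem z hz =>
    simp only [CasimirAux.Sset, Set.mem_insert_iff, Set.mem_singleton_iff] at hz
    rcases hz with rfl|rfl|rfl|rfl|rfl|rfl|rfl|rfl
    · rw [show ⁅x1 K, x12 K⁆ = x112 K from rfl, show ⁅x1 K, x112 K⁆ = x1112 K from rfl,
        show ⁅x1 K, x212 K⁆ = x1212 K from rfl, CasimirAux.z1112, CasimirAux.z1212,
        CasimirAux.z2212]
      simp only [map_zero]
      ring
    · rw [show ⁅x2 K, x12 K⁆ = x212 K from rfl, CasimirAux.jacobi2112,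
        show ⁅x2 K, x212 K⁆ = x2212 K from rfl, CasimirAux.z1112, CasimirAux.z1212,
        CasimirAux.z2212]
      simp only [map_zero]
      ring
    · rw [CasimirAux.qlie_self, CasimirAux.z12_112, CasimirAux.z12_212, CasimirAux.z1112,
        CasimirAux.z1212, CasimirAux.z2212]
      simp only [map_zero]
      ring
    · rw [CasimirAux.z112_12, CasimirAux.qlie_self, CasimirAux.z112_212, CasimirAux.z1112,
        CasimirAux.z1212, CasimirAux.z2212]
      simp only [map_zero]
      ring
    · rw [CasimirAux.z212_12, CasimirAux.z212_112, CasimirAux.qlie_self, CasimirAux.z1112,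
        CasimirAux.z1212, CasimirAux.z2212]
      simp only [map_zero]
      ring
    · rw [CasimirAux.z1112' K (x12 K), CasimirAux.z1112' K (x112 K),
        CasimirAux.z1112' K (x212 K), CasimirAux.z1112, CasimirAux.z1212, CasimirAux.z2212]
      simp only [map_zero]
      ring
    · rw [CasimirAux.z1212' K (x12 K), CasimirAux.z1212' K (x112 K),
        CasimirAux.z1212' K (x212 K), CasimirAux.z1112, CasimirAux.z1212, CasimirAux.z2212]
      simp only [map_zero]
      ring
    · rw [CasimirAux.z2212' K (x12 K), CasimirAux.z2212' K (x112 K),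
        CasimirAux.z2212' K (x212 K), CasimirAux.z1112, CasimirAux.z1212, CasimirAux.z2212]
      simp only [map_zero]
      ring
  | zero =>
    simp only [CasimirAux.qzero_lie, map_zero]
    ring
  | add a b ha hb iha ihb =>
    simp only [CasimirAux.qadd_lie, map_add]
    linear_combination iha + ihb
  | smul c a ha iha =>
    simp only [CasimirAux.qsmul_lie, map_smul, smul_eq_mul]
    linear_combination c * iha
end

section
/- Let K be a field of characteristic zero and let L be the free nilpotent Lie algebra of rank 3 and step 3 over K with generators x_1, x_2, x_3; set x_{ij} = ⁅x_i, x_j⁆ for 1 ≤ i < j ≤ 3 and x_{kij} = ⁅x_k, x_{ij}⁆. Let p ∈ L* satisfy p(x_{312}) = p(x_{313}) = p(x_{323}) = 0. Then for every v ∈ L, setting q(w) = p(⁅v,w⁆), the directional derivative of the function G(p) = p(x_3)(p(x_{113})p(x_{223}) − p(x_{123})²) − ½(p(x_{13})² p(x_{223}) − p(x_{13})p(x_{23})(p(x_{123}) + p(x_{213})) + p(x_{23})² p(x_{113})) along q vanishes at p; explicitly, q(x_3)(p(x_{113})p(x_{223}) − p(x_{123})²) + p(x_3)(q(x_{113})p(x_{223})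 + p(x_{113})q(x_{223}) − 2p(x_{123})q(x_{123})) − p(x_{13})q(x_{13})p(x_{223}) − ½ p(x_{13})² q(x_{223}) + ½(q(x_{13})p(x_{23}) + p(x_{13})q(x_{23}))(p(x_{123}) + p(x_{213})) + ½ p(x_{13})p(x_{23})(q(x_{123}) + q(x_{213})) − p(x_{23})q(x_{23})p(x_{113}) − ½ p(x_{23})² q(x_{113}) = 0. (Hence G is constant on the special coadjoint orbits through points annihilating x_{312}, x_{313}, x_{323}.) -/
namespace Rank3Step3

variable (K : Type*) [Field K]

noncomputable def x1 : FreeNilpotentLie K 3 3 := FreeNilpotentLie.gen K 3 3 0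
noncomputable def x2 : FreeNilpotentLie K 3 3 := FreeNilpotentLie.gen K 3 3 1
noncomputable def x3 : FreeNilpotentLie K 3 3 := FreeNilpotentLie.gen K 3 3 2
noncomputable def x12 : FreeNilpotentLie K 3 3 := ⁅x1 K, x2 K⁆
noncomputable def x13 : FreeNilpotentLie K 3 3 := ⁅x1 K, x3 K⁆
noncomputable def x23 : FreeNilpotentLie K 3 3 := ⁅x2 K, x3 K⁆
noncomputable def x113 : FreeNilpotentLie K 3 3 := ⁅x1 K, x13 K⁆
noncomputable def x123 : FreeNilpotentLie K 3 3 := ⁅x1 K, x23 K⁆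
noncomputable def x213 : FreeNilpotentLie K 3 3 := ⁅x2 K, x13 K⁆
noncomputable def x223 : FreeNilpotentLie K 3 3 := ⁅x2 K, x23 K⁆
noncomputable def x312 : FreeNilpotentLie K 3 3 := ⁅x3 K, x12 K⁆
noncomputable def x313 : FreeNilpotentLie K 3 3 := ⁅x3 K, x13 K⁆
noncomputable def x323 : FreeNilpotentLie K 3 3 := ⁅x3 K, x23 K⁆

end Rank3Step3

private lemma freeLie_subalgebra_eq_top {K : Type*} [Field K] {X : Type*}
    (S : LieSubalgebra K (FreeLieAlgebra K X)) (h : ∀ x, FreeLieAlgebra.of K x ∈ S)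
    (y : FreeLieAlgebra K X) : y ∈ S := by
  let f : FreeLieAlgebra K X →ₗ⁅K⁆ S :=
    FreeLieAlgebra.lift K fun x => (⟨FreeLieAlgebra.of K x, h x⟩ : S)
  have key : S.incl.comp f = LieHom.id := by
    apply FreeLieAlgebra.hom_ext
    intro x
    simp [f, FreeLieAlgebra.lift_of_apply]
  have h2 : S.incl (f y) = y := by
    have := LieHom.congr_fun key y
    simpa using this
  rw [← h2]; exact (f y).2

private lemma quot_induction (K : Type*) [Field K]
    (P : FreeNilpotentLie K 3 3 → Prop)
    (h0 : P 0)
    (hadd : ∀ a b, P a → P b → P (a + b))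
    (hsmul : ∀ (c : K) (a), P a → P (c • a))
    (hlie : ∀ a b, P a → P b → P ⁅a, b⁆)
    (hgen : ∀ i, P (FreeNilpotentLie.gen K 3 3 i)) (v : FreeNilpotentLie K 3 3) : P v := by
  obtain ⟨y, rfl⟩ := LieSubmodule.Quotient.surjective_mk' _ v
  let S : LieSubalgebra K (FreeLieAlgebra K (Fin 3)) :=
    { carrier := {y | P (LieSubmodule.Quotient.mk' _ y)}
      add_mem' := fun {a b} ha hb => by
        simpa only [Set.mem_setOf_eq, map_add] using hadd _ _ ha hb
      zero_mem' := by simpa only [Set.mem_setOf_eq, map_zero] using h0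
      smul_mem' := fun c a ha => by
        simpa only [Set.mem_setOf_eq, map_smul] using hsmul c _ ha
      lie_mem' := fun {a b} ha hb => hlie _ _ ha hb }
  exact freeLie_subalgebra_eq_top S hgen y

private lemma nil4 {K : Type*} [Field K] (a b c d : FreeNilpotentLie K 3 3) :
    ⁅a, ⁅b, ⁅c, d⁆⁆⁆ = 0 := by
  obtain ⟨a, rfl⟩ := LieSubmodule.Quotient.surjective_mk' _ a
  obtain ⟨b, rfl⟩ := LieSubmodule.Quotient.surjective_mk' _ b
  obtain ⟨c, rfl⟩ := LieSubmodule.Quotient.surjective_mk' _ c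
  obtain ⟨d, rfl⟩ := LieSubmodule.Quotient.surjective_mk' _ d
  set I := LieModule.lowerCentralSeries K (FreeLieAlgebra K (Fin 3)) (FreeLieAlgebra K (Fin 3)) 3
  have hmk : ∀ x y : FreeLieAlgebra K (Fin 3),
      ⁅(LieSubmodule.Quotient.mk' I x : FreeNilpotentLie K 3 3),
        LieSubmodule.Quotient.mk' I y⁆ = LieSubmodule.Quotient.mk' I ⁅x, y⁆ := fun _ _ => rfl
  rw [hmk, hmk, hmk, LieSubmodule.Quotient.mk_eq_zero]
  show ⁅a, ⁅b, ⁅c, d⁆⁆⁆ ∈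
    LieModule.lowerCentralSeries K (FreeLieAlgebra K (Fin 3)) (FreeLieAlgebra K (Fin 3)) (0+1+1+1)
  rw [LieModule.lowerCentralSeries_succ]
  refine LieSubmodule.lie_mem_lie (LieSubmodule.mem_top _) ?_
  rw [LieModule.lowerCentralSeries_succ]
  refine LieSubmodule.lie_mem_lie (LieSubmodule.mem_top _) ?_
  rw [LieModule.lowerCentralSeries_succ]
  exact LieSubmodule.lie_mem_lie (LieSubmodule.mem_top _) (LieSubmodule.mem_top _)


section Bridge
variable {K : Type*} [Field K]
private lemma qlie_zero (a : FreeNilpotentLie K 3 3) : ⁅a, (0 : FreeNilpotentLie K 3 3)⁆ = 0 :=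
  lie_zero a
private lemma qzero_lie (a : FreeNilpotentLie K 3 3) : ⁅(0 : FreeNilpotentLie K 3 3), a⁆ = 0 :=
  zero_lie a
private lemma qlie_add (a b c : FreeNilpotentLie K 3 3) : ⁅a, b + c⁆ = ⁅a, b⁆ + ⁅a, c⁆ :=
  lie_add a b c
private lemma qadd_lie (a b c : FreeNilpotentLie K 3 3) : ⁅a + b, c⁆ = ⁅a, c⁆ + ⁅b, c⁆ :=
  add_lie a b c
private lemma qlie_smul (t : K) (a b : FreeNilpotentLie K 3 3) : ⁅a, t • b⁆ = t • ⁅a, b⁆ :=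
  lie_smul t a b
private lemma qsmul_lie (t : K) (a b : FreeNilpotentLie K 3 3) : ⁅t • a, b⁆ = t • ⁅a, b⁆ :=
  smul_lie t a b
private lemma qlie_self (a : FreeNilpotentLie K 3 3) : ⁅a, a⁆ = 0 := lie_self a
private lemma qlie_neg (a b : FreeNilpotentLie K 3 3) : ⁅a, -b⁆ = -⁅a, b⁆ := lie_neg a b
private lemma qneg_lie (a b : FreeNilpotentLie K 3 3) : ⁅-a, b⁆ = -⁅a, b⁆ := neg_lie a b
private lemma qlie_sub (a b c : FreeNilpotentLie K 3 3) : ⁅a, b - c⁆ = ⁅a, b⁆ - ⁅a, c⁆ :=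
  lie_sub a b c
private lemma qskew (a b : FreeNilpotentLie K 3 3) : ⁅a, b⁆ = -⁅b, a⁆ := by exact (lie_skew a b).symm
private lemma qlie_lie (a b c : FreeNilpotentLie K 3 3) :
    ⁅⁅a, b⁆, c⁆ = ⁅a, ⁅b, c⁆⁆ - ⁅b, ⁅a, c⁆⁆ := by exact lie_lie a b c
private lemma qleibniz (a b c : FreeNilpotentLie K 3 3) :
    ⁅a, ⁅b, c⁆⁆ = ⁅⁅a, b⁆, c⁆ + ⁅b, ⁅a, c⁆⁆ := leibniz_lie a b c
end Bridge

open Rank3Step3 in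
/-- On the free nilpotent Lie algebra of rank 3 and step 3, for every
`p ∈ L*` with `p(x₃₁₂) = p(x₃₁₃) = p(x₃₂₃) = 0`, the directional derivative along
`q(w) = p ⁅v, w⁆` of
`G(p) = p(x₃)(p(x₁₁₃)p(x₂₂₃) − p(x₁₂₃)²)
  − ½ (p(x₁₃)² p(x₂₂₃) − p(x₁₃)p(x₂₃)(p(x₁₂₃) + p(x₂₁₃)) + p(x₂₃)² p(x₁₁₃))`
vanishes at `p` for every `v ∈ L`. -/
theorem rank3_step3_special_orbit_invariant
    (K : Type*) [Field K] [CharZero K]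
    (p : Module.Dual K (FreeNilpotentLie K 3 3))
    (h312 : p (x312 K) = 0) (h313 : p (x313 K) = 0) (h323 : p (x323 K) = 0)
    (v : FreeNilpotentLie K 3 3) :
    p ⁅v, x3 K⁆ * (p (x113 K) * p (x223 K) - p (x123 K) ^ 2) +
      p (x3 K) * (p ⁅v, x113 K⁆ * p (x223 K) + p (x113 K) * p ⁅v, x223 K⁆ -
        2 * p (x123 K) * p ⁅v, x123 K⁆) -
      p (x13 K) * p ⁅v, x13 K⁆ * p (x223 K) -
      (1 / 2 : K) * p (x13 K) ^ 2 * p ⁅v, x223 K⁆ +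
      (1 / 2 : K) * (p ⁅v, x13 K⁆ * p (x23 K) + p (x13 K) * p ⁅v, x23 K⁆) *
        (p (x123 K) + p (x213 K)) +
      (1 / 2 : K) * p (x13 K) * p (x23 K) * (p ⁅v, x123 K⁆ + p ⁅v, x213 K⁆) -
      p (x23 K) * p ⁅v, x23 K⁆ * p (x113 K) -
      (1 / 2 : K) * p (x23 K) ^ 2 * p ⁅v, x113 K⁆ = 0 := by
  -- `p ⁅x₃, ⁅a, b⁆⁆ = 0` for all `a b`.
  have base : ∀ i j : Fin 3,
      p ⁅x3 K, ⁅FreeNilpotentLie.gen K 3 3 i, FreeNilpotentLie.gen K 3 3 j⁆⁆ = 0 := by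
    intro i j
    fin_cases i <;> fin_cases j
    · rw [qlie_self, qlie_zero, map_zero]
    · exact h312
    · exact h313
    · show p ⁅x3 K, ⁅x2 K, x1 K⁆⁆ = 0
      rw [qskew (x2 K) (x1 K), qlie_neg, map_neg, neg_eq_zero]
      exact h312
    · rw [qlie_self, qlie_zero, map_zero]
    · exact h323
    · show p ⁅x3 K, ⁅x3 K, x1 K⁆⁆ = 0
      rw [qskew (x3 K) (x1 K), qlie_neg, map_neg, neg_eq_zero]
      exact h313
    · show p ⁅x3 K, ⁅x3 K, x2 K⁆⁆ = 0
      rw [qskew (x3 K) (x2 K), qlie_neg, map_neg, neg_eq_zero]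
      exact h323
    · rw [qlie_self, qlie_zero, map_zero]
  have hTg : ∀ (i : Fin 3) (w : FreeNilpotentLie K 3 3),
      p ⁅x3 K, ⁅FreeNilpotentLie.gen K 3 3 i, w⁆⁆ = 0 := by
    intro i
    refine quot_induction K (fun w => p ⁅x3 K, ⁅FreeNilpotentLie.gen K 3 3 i, w⁆⁆ = 0)
      ?_ ?_ ?_ ?_ ?_
    · show p ⁅x3 K, ⁅FreeNilpotentLie.gen K 3 3 i, (0 : FreeNilpotentLie K 3 3)⁆⁆ = 0
      rw [qlie_zero, qlie_zero, map_zero]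
    · intro a b ha hb
      show p ⁅x3 K, ⁅FreeNilpotentLie.gen K 3 3 i, a + b⁆⁆ = 0
      rw [qlie_add, qlie_add, map_add, ha, hb, add_zero]
    · intro c a ha
      show p ⁅x3 K, ⁅FreeNilpotentLie.gen K 3 3 i, c • a⁆⁆ = 0
      rw [qlie_smul, qlie_smul, map_smul, ha, smul_zero]
    · intro a b _ _
      show p ⁅x3 K, ⁅FreeNilpotentLie.gen K 3 3 i, ⁅a, b⁆⁆⁆ = 0
      rw [nil4, map_zero]
    · exact base i
  have hT : ∀ a b : FreeNilpotentLie K 3 3, p ⁅x3 K, ⁅a, b⁆⁆ = 0 := by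
    intro a
    refine quot_induction K (fun a => ∀ b, p ⁅x3 K, ⁅a, b⁆⁆ = 0) ?_ ?_ ?_ ?_ ?_ a
    · intro b; rw [qzero_lie, qlie_zero, map_zero]
    · intro a b ha hb w
      rw [qadd_lie, qlie_add, map_add, ha, hb, add_zero]
    · intro c a ha w
      rw [qsmul_lie, qlie_smul, map_smul, ha, smul_zero]
    · intro a b ha hb w
      rw [qlie_lie, qlie_sub, map_sub, ha, hb, sub_zero]
    · intro i w; exact hTg i w
  -- symmetry of `(a, b) ↦ p ⁅a, ⁅b, x₃⁆⁆`
  have hsym : ∀ a b : FreeNilpotentLie K 3 3, p ⁅a, ⁅b, x3 K⁆⁆ = p ⁅b, ⁅a, x3 K⁆⁆ := by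
    intro a b
    have h2 : p ⁅⁅a, b⁆, x3 K⁆ = 0 := by
      rw [qskew, map_neg, hT, neg_zero]
    rw [qleibniz a b (x3 K), map_add, h2, zero_add]
  -- `p x₂₁₃ = p x₁₂₃`
  have h213 : p (x213 K) = p (x123 K) := by
    have hx : x312 K = x213 K - x123 K := by
      have h1 : ⁅x3 K, x1 K⁆ = -(x13 K) := qskew _ _
      have h2 : ⁅x3 K, x2 K⁆ = -(x23 K) := qskew _ _
      rw [x312, x12, qleibniz, h1, h2, qneg_lie, qlie_neg, x213, x123, qskew (x13 K) (x2 K)]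
      abel
    have := h312
    rw [hx, map_sub, sub_eq_zero] at this
    exact this
  -- the key linear identity
  have hz : ∀ u : FreeNilpotentLie K 3 3,
      (p (x113 K) * p (x223 K) - p (x123 K) * p (x123 K)) * p ⁅u, x3 K⁆
        + (p (x23 K) * p (x123 K) - p (x13 K) * p (x223 K)) * p ⁅u, x13 K⁆
        + (p (x13 K) * p (x123 K) - p (x23 K) * p (x113 K)) * p ⁅u, x23 K⁆ = 0 := by
    refine quot_induction K _ ?_ ?_ ?_ ?_ ?_
    · simp
    · intro a b ha hb
      simp only [qadd_lie, map_add]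
      linear_combination ha + hb
    · intro c a ha
      simp only [qsmul_lie, map_smul, smul_eq_mul]
      linear_combination c * ha
    · intro a b _ _
      have h3 : p ⁅⁅a, b⁆, x3 K⁆ = 0 := by
        rw [qlie_lie, map_sub, hsym, sub_self]
      have g13 : p ⁅⁅a, b⁆, x13 K⁆ = 0 := by
        rw [show x13 K = ⁅x1 K, x3 K⁆ from rfl, qlie_lie, nil4, nil4, sub_zero, map_zero]
      have g23 : p ⁅⁅a, b⁆, x23 K⁆ = 0 := by
        rw [show x23 K = ⁅x2 K, x3 K⁆ from rfl, qlie_lie, nil4, nil4, sub_zero, map_zero]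
      rw [h3, g13, g23]
      ring
    · intro i
      fin_cases i
      · show (p (x113 K) * p (x223 K) - p (x123 K) * p (x123 K)) * p (x13 K)
          + (p (x23 K) * p (x123 K) - p (x13 K) * p (x223 K)) * p (x113 K)
          + (p (x13 K) * p (x123 K) - p (x23 K) * p (x113 K)) * p (x123 K) = 0
        ring
      · show (p (x113 K) * p (x223 K) - p (x123 K) * p (x123 K)) * p (x23 K)
          + (p (x23 K) * p (x123 K) - p (x13 K) * p (x223 K)) * p (x213 K)
          + (p (x13 K) * p (x123 K) - p (x23 K) * p (x113 K)) * p (x223 K) = 0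
        rw [h213]; ring
      · show (p (x113 K) * p (x223 K) - p (x123 K) * p (x123 K)) * p ⁅x3 K, x3 K⁆
          + (p (x23 K) * p (x123 K) - p (x13 K) * p (x223 K)) * p (x313 K)
          + (p (x13 K) * p (x123 K) - p (x23 K) * p (x113 K)) * p (x323 K) = 0
        rw [qlie_self, map_zero, h313, h323]; ring
  -- degree-3 brackets die
  have e113 : p ⁅v, x113 K⁆ = 0 := by
    rw [show x113 K = ⁅x1 K, ⁅x1 K, x3 K⁆⁆ from rfl, nil4, map_zero]
  have e123 : p ⁅v, x123 K⁆ = 0 := by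
    rw [show x123 K = ⁅x1 K, ⁅x2 K, x3 K⁆⁆ from rfl, nil4, map_zero]
  have e213 : p ⁅v, x213 K⁆ = 0 := by
    rw [show x213 K = ⁅x2 K, ⁅x1 K, x3 K⁆⁆ from rfl, nil4, map_zero]
  have e223 : p ⁅v, x223 K⁆ = 0 := by
    rw [show x223 K = ⁅x2 K, ⁅x2 K, x3 K⁆⁆ from rfl, nil4, map_zero]
  rw [e113, e123, e213, e223, h213]
  linear_combination hz v
end
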